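/- arXiv:1109.2463 — 7 statements merged into one kernel-verified Lean document; each statement's English description precedes it below -/
import Mathlib

section
/- Let c > b > 0 be integers with d-binomial expansions b = C(b_d, d) + ... + C(b_j, j) (with b_d > ... > b_j ≥ j ≥ 1) and c = C(c_d, d) + ... + C(c_i, i) (with c_d > ... > c_i ≥ i ≥ 1). Then b^(d) = c^(d) if and only if j ≥ 2 and c - b ≤ j - 1. -/
open Finset

private lemma gap' {A : ℕ → ℕ} {m : ℕ} (hmono : ∀ s, 1 ≤ s → s < m → A s < A (s+1)) :
    ∀ r s, 1 ≤ s → s ≤ r → r ≤ m → A s + (r - s) ≤ A r := by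
  intro r
  induction r with
  | zero => intro s h1 h2 h3; omega
  | succ n ih =>
    intro s h1 h2 h3
    rcases Nat.eq_or_lt_of_le h2 with h | h
    · rw [h]; simp
    · have hs : s ≤ n := by omega
      have h4 := ih s h1 hs (by omega)
      have h5 := hmono n (by omega) (by omega)
      omega

private lemma sumlt : ∀ (m : ℕ), 1 ≤ m → ∀ (A : ℕ → ℕ),
    (∀ s, 1 ≤ s → s < m → A s < A (s+1)) →
    ∑ s ∈ Ioc 0 m, (A s).choose s < (A m + 1).choose m := by
  intro m
  induction m with
  | zero => omega
  | succ n ih =>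
    intro _ A hmono
    rcases Nat.eq_zero_or_pos n with h | h
    · subst h
      rw [show Ioc 0 1 = {1} from rfl]
      simp [Nat.choose_one_right]
    · rw [Finset.sum_Ioc_succ_top (by omega)]
      have h1 := ih h A (fun s hs1 hs2 => hmono s hs1 (by omega))
      have h2 : A n + 1 ≤ A (n+1) := hmono n h (by omega)
      have h3 : (A n + 1).choose n ≤ (A (n+1)).choose n := Nat.choose_le_choose n h2
      have h4 : (A (n+1) + 1).choose (n+1) = (A (n+1)).choose n + (A (n+1)).choose (n+1) :=
        Nat.choose_succ_succ _ _
      omega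

private lemma sumlt' : ∀ (m : ℕ), 1 ≤ m → ∀ (A : ℕ → ℕ),
    (∀ s, 1 ≤ s → s < m → A s < A (s+1)) →
    m ≤ A m →
    ∑ s ∈ Ioc 0 m, (A s).choose (s+1) < (A m + 1).choose (m+1) := by
  intro m
  induction m with
  | zero => omega
  | succ n ih =>
    intro _ A hmono htop
    have hkey : (A (n+1) + 1).choose (n+1+1) = (A (n+1)).choose (n+1) + (A (n+1)).choose (n+1+1) :=
      Nat.choose_succ_succ _ _
    have hpos : 0 < (A (n+1)).choose (n+1) := Nat.choose_pos htop
    rcases Nat.eq_zero_or_pos n with h | h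
    · subst h
      rw [show Ioc 0 1 = {1} from rfl, sum_singleton]
      simp only [Nat.zero_add] at hkey hpos ⊢
      omega
    · rw [Finset.sum_Ioc_succ_top (by omega)]
      by_cases hc : n ≤ A n
      · have h1 := ih h A (fun s a b => hmono s a (by omega)) hc
        have h2 : A n + 1 ≤ A (n+1) := hmono n h (by omega)
        have h3 : (A n + 1).choose (n+1) ≤ (A (n+1)).choose (n+1) :=
          Nat.choose_le_choose (n+1) h2
        have h4 : (A (n+1)).choose (n+1+1) ≤ (A (n+1) + 1).choose (n+1+1) :=
          Nat.choose_le_choose _ (by omega)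
        omega
      · have hz : ∑ s ∈ Ioc 0 n, (A s).choose (s+1) = 0 := by
          apply Finset.sum_eq_zero
          intro s hs
          simp only [mem_Ioc] at hs
          have := gap' hmono n s hs.1 hs.2 (by omega)
          exact Nat.choose_eq_zero_of_lt (by omega)
        rw [hz]
        omega

private lemma uniq : ∀ (m : ℕ) (A A' : ℕ → ℕ),
    (∀ s, 1 ≤ s → s < m → A s < A (s+1)) →
    (∀ s, 1 ≤ s → s < m → A' s < A' (s+1)) →
    (∑ s ∈ Ioc 0 m, (A s).choose s = ∑ s ∈ Ioc 0 m, (A' s).choose s) →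
    ∀ s, 1 ≤ s → s ≤ m → A s = A' s := by
  intro m
  induction m with
  | zero => intro A A' _ _ _ s h1 h2; omega
  | succ n ih =>
    intro A A' hA hA' hsum s h1 h2
    have htop : A (n+1) = A' (n+1) := by
      by_contra hne
      rcases Nat.lt_or_ge (A (n+1)) (A' (n+1)) with h | h
      · have g1 := sumlt (n+1) (by omega) A hA
        have g2 : (A (n+1) + 1).choose (n+1) ≤ (A' (n+1)).choose (n+1) :=
          Nat.choose_le_choose _ h
        have g3 : (A' (n+1)).choose (n+1) ≤ ∑ s ∈ Ioc 0 (n+1), (A' s).choose s :=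
          Finset.single_le_sum (f := fun s => (A' s).choose s) (fun i _ => Nat.zero_le _)
            (mem_Ioc.mpr ⟨Nat.succ_pos n, le_refl _⟩)
        omega
      · have hlt : A' (n+1) < A (n+1) := by omega
        have g1 := sumlt (n+1) (by omega) A' hA'
        have g2 : (A' (n+1) + 1).choose (n+1) ≤ (A (n+1)).choose (n+1) :=
          Nat.choose_le_choose _ hlt
        have g3 : (A (n+1)).choose (n+1) ≤ ∑ s ∈ Ioc 0 (n+1), (A s).choose s :=
          Finset.single_le_sum (f := fun s => (A s).choose s) (fun i _ => Nat.zero_le _)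
            (mem_Ioc.mpr ⟨Nat.succ_pos n, le_refl _⟩)
        omega
    rcases Nat.eq_or_lt_of_le h2 with he | hlt
    · rw [he]; exact htop
    · rw [Finset.sum_Ioc_succ_top (by omega), Finset.sum_Ioc_succ_top (by omega)] at hsum
      rw [htop] at hsum
      have hsum' : ∑ s ∈ Ioc 0 n, (A s).choose s = ∑ s ∈ Ioc 0 n, (A' s).choose s := by omega
      exact ih A A' (fun s a b => hA s a (by omega)) (fun s a b => hA' s a (by omega)) hsum' s h1 (by omega)

private lemma ge_of_rep {A : ℕ → ℕ} {j d : ℕ}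
    (hmono : ∀ s, j ≤ s → s < d → A s < A (s+1)) (hbase : j ≤ A j) :
    ∀ s, j ≤ s → s ≤ d → s ≤ A s := by
  intro s
  induction s with
  | zero => intro _ _; omega
  | succ n ih =>
    intro h1 h2
    rcases Nat.lt_or_ge j (n+1) with h | h
    · have g1 := ih (by omega) (by omega)
      have g2 := hmono n (by omega) (by omega)
      omega
    · have h3 : j = n+1 := by omega
      exact h3 ▸ hbase

private lemma sum_ext {g : ℕ → ℕ} {j d : ℕ} (hj : 1 ≤ j)
    (hz : ∀ s, 0 < s → s < j → g s = 0) :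
    ∑ s ∈ Ioc 0 d, g s = ∑ s ∈ Icc j d, g s := by
  refine (Finset.sum_subset ?_ ?_).symm
  · intro x hx; simp only [mem_Icc, mem_Ioc] at *; omega
  · intro x hx hnx
    simp only [mem_Icc, mem_Ioc] at hx hnx
    exact hz x (by omega) (by omega)

/-- Let `c > b > 0` have `d`-binomial expansions
`b = C(b_d, d) + ... + C(b_j, j)` (with `b_d > ... > b_j ≥ j ≥ 1`) and
`c = C(c_d, d) + ... + C(c_i, i)` (with `c_d > ... > c_i ≥ i ≥ 1`).  Then
`b^(d) = c^(d)` if and only if `j ≥ 2` and `c - b ≤ j - 1`. -/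
theorem stmt1 (b c d i j : ℕ) (bseq cseq : ℕ → ℕ)
    (hb : 0 < b) (hbc : b < c)
    (hj : 1 ≤ j) (hjd : j ≤ d) (hi : 1 ≤ i) (hid : i ≤ d)
    (hbmono : ∀ s, j ≤ s → s < d → bseq s < bseq (s + 1)) (hbbase : j ≤ bseq j)
    (hcmono : ∀ s, i ≤ s → s < d → cseq s < cseq (s + 1)) (hcbase : i ≤ cseq i)
    (hbrep : b = ∑ s ∈ Finset.Icc j d, Nat.choose (bseq s) s)
    (hcrep : c = ∑ s ∈ Finset.Icc i d, Nat.choose (cseq s) s) :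
    (∑ s ∈ Finset.Icc j d, Nat.choose (bseq s) (s + 1))
      = (∑ s ∈ Finset.Icc i d, Nat.choose (cseq s) (s + 1))
    ↔ (2 ≤ j ∧ c - b ≤ j - 1) := by
  classical
  have hbge := ge_of_rep hbmono hbbase
  have hcge := ge_of_rep hcmono hcbase
  set B : ℕ → ℕ := fun s => if j ≤ s then bseq s else s - 1 with hBdef
  set C : ℕ → ℕ := fun s => if i ≤ s then cseq s else s - 1 with hCdef
  have hBmono : ∀ s, 1 ≤ s → s < d → B s < B (s+1) := by
    intro s h1 h2
    simp only [hBdef]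
    split_ifs with p q q
    · exact hbmono s p h2
    · omega
    · have h3 : j = s+1 := by omega
      have h4 : s+1 ≤ bseq (s+1) := h3 ▸ hbbase
      omega
    · omega
  have hCmono : ∀ s, 1 ≤ s → s < d → C s < C (s+1) := by
    intro s h1 h2
    simp only [hCdef]
    split_ifs with p q q
    · exact hcmono s p h2
    · omega
    · have h3 : i = s+1 := by omega
      have h4 : s+1 ≤ cseq (s+1) := h3 ▸ hcbase
      omega
    · omega
  have hBge : ∀ s, 1 ≤ s → s ≤ d → s ≤ B s + 1 := by
    intro s h1 h2
    simp only [hBdef]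
    split_ifs with p
    · have := hbge s p h2; omega
    · omega
  have hCge : ∀ s, 1 ≤ s → s ≤ d → s ≤ C s + 1 := by
    intro s h1 h2
    simp only [hCdef]
    split_ifs with p
    · have := hcge s p h2; omega
    · omega
  have hbB : ∑ s ∈ Finset.Ioc 0 d, (B s).choose s = b := by
    rw [hbrep, sum_ext hj (fun s a hlt => by
      simp only [hBdef]
      rw [if_neg (by omega)]
      exact Nat.choose_eq_zero_of_lt (by omega))]
    exact Finset.sum_congr rfl (fun x hx => by
      rw [Finset.mem_Icc] at hx
      simp only [hBdef]
      rw [if_pos hx.1])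
  have hcC : ∑ s ∈ Finset.Ioc 0 d, (C s).choose s = c := by
    rw [hcrep, sum_ext hi (fun s a hlt => by
      simp only [hCdef]
      rw [if_neg (by omega)]
      exact Nat.choose_eq_zero_of_lt (by omega))]
    exact Finset.sum_congr rfl (fun x hx => by
      rw [Finset.mem_Icc] at hx
      simp only [hCdef]
      rw [if_pos hx.1])
  have hfB : ∑ s ∈ Finset.Ioc 0 d, (B s).choose (s+1)
      = ∑ s ∈ Finset.Icc j d, (bseq s).choose (s+1) := by
    rw [sum_ext hj (fun s a hlt => by
      simp only [hBdef]
      rw [if_neg (by omega)]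
      exact Nat.choose_eq_zero_of_lt (by omega))]
    exact Finset.sum_congr rfl (fun x hx => by
      rw [Finset.mem_Icc] at hx
      simp only [hBdef]
      rw [if_pos hx.1])
  have hfC : ∑ s ∈ Finset.Ioc 0 d, (C s).choose (s+1)
      = ∑ s ∈ Finset.Icc i d, (cseq s).choose (s+1) := by
    rw [sum_ext hi (fun s a hlt => by
      simp only [hCdef]
      rw [if_neg (by omega)]
      exact Nat.choose_eq_zero_of_lt (by omega))]
    exact Finset.sum_congr rfl (fun x hx => by
      rw [Finset.mem_Icc] at hx
      simp only [hCdef]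
      rw [if_pos hx.1])
  constructor
  · -- forward direction, by contradiction
    intro hfeq
    by_contra hRHS
    have hcb : b + j ≤ c := by
      by_contra hno
      exact hRHS ⟨by omega, by omega⟩
    have hSne : ((Finset.Ioc 0 d).filter (fun s => B s ≠ C s)).Nonempty := by
      by_contra hS
      have hall : ∀ s ∈ Finset.Ioc 0 d, B s = C s := by
        intro s hs
        by_contra hne
        exact hS ⟨s, Finset.mem_filter.mpr ⟨hs, hne⟩⟩
      have : b = c := by
        rw [← hbB, ← hcC]
        exact Finset.sum_congr rfl (fun x hx => by rw [hall x hx])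
      omega
    set t := ((Finset.Ioc 0 d).filter (fun s => B s ≠ C s)).max' hSne with htdef
    have htmem := Finset.max'_mem _ hSne
    rw [← htdef, Finset.mem_filter, Finset.mem_Ioc] at htmem
    have ht1 : 0 < t := htmem.1.1
    have htd : t ≤ d := htmem.1.2
    have hgt : ∀ s, t < s → s ≤ d → B s = C s := by
      intro s hs hsd
      by_contra hne
      have : s ≤ t :=
        Finset.le_max' _ s (Finset.mem_filter.mpr ⟨Finset.mem_Ioc.mpr ⟨by omega, hsd⟩, hne⟩)
      omega
    have hsplitB := Finset.sum_Ioc_consecutive (fun s => (B s).choose s) (Nat.zero_le t) htd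
    have hsplitC := Finset.sum_Ioc_consecutive (fun s => (C s).choose s) (Nat.zero_le t) htd
    have hupper : ∑ s ∈ Finset.Ioc t d, (B s).choose s
        = ∑ s ∈ Finset.Ioc t d, (C s).choose s :=
      Finset.sum_congr rfl (fun x hx => by
        rw [Finset.mem_Ioc] at hx; rw [hgt x hx.1 hx.2])
    have hPQ : ∑ s ∈ Finset.Ioc 0 t, (B s).choose s < ∑ s ∈ Finset.Ioc 0 t, (C s).choose s := by
      omega
    have hBCt : B t < C t := by
      rcases Nat.lt_or_ge (B t) (C t) with h | h
      · exact h
      · exfalso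
        have hne := htmem.2
        have hlt : C t < B t := by omega
        have g1 := sumlt t ht1 C (fun s a bb => hCmono s a (by omega))
        have g2 : (C t + 1).choose t ≤ (B t).choose t := Nat.choose_le_choose _ hlt
        have g3 : (B t).choose t ≤ ∑ s ∈ Finset.Ioc 0 t, (B s).choose s :=
          Finset.single_le_sum (f := fun s => (B s).choose s) (fun _ _ => Nat.zero_le _)
            (Finset.mem_Ioc.mpr ⟨ht1, le_refl t⟩)
        omega
    rcases Nat.lt_or_ge t (C t) with hct | hct
    · -- C t ≥ t + 1 : strict inequality of the derived sums, contradiction with hfeq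
      have hfeq' : ∑ s ∈ Finset.Ioc 0 d, (B s).choose (s+1)
          = ∑ s ∈ Finset.Ioc 0 d, (C s).choose (s+1) := by rw [hfB, hfC]; exact hfeq
      have hsplitB' := Finset.sum_Ioc_consecutive (fun s => (B s).choose (s+1)) (Nat.zero_le t) htd
      have hsplitC' := Finset.sum_Ioc_consecutive (fun s => (C s).choose (s+1)) (Nat.zero_le t) htd
      have hupper' : ∑ s ∈ Finset.Ioc t d, (B s).choose (s+1)
          = ∑ s ∈ Finset.Ioc t d, (C s).choose (s+1) :=
        Finset.sum_congr rfl (fun x hx => by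
          rw [Finset.mem_Ioc] at hx; rw [hgt x hx.1 hx.2])
      have hFQ : (C t).choose (t+1) ≤ ∑ s ∈ Finset.Ioc 0 t, (C s).choose (s+1) :=
        Finset.single_le_sum (f := fun s => (C s).choose (s+1)) (fun _ _ => Nat.zero_le _)
          (Finset.mem_Ioc.mpr ⟨ht1, le_refl t⟩)
      rcases Nat.lt_or_ge (B t) t with hb2 | hb2
      · have hFP : ∑ s ∈ Finset.Ioc 0 t, (B s).choose (s+1) = 0 :=
          Finset.sum_eq_zero (fun s hs => by
            rw [Finset.mem_Ioc] at hs
            have := gap' (m := t) (fun s a bb => hBmono s a (by omega)) t s hs.1 hs.2 (le_refl t)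
            exact Nat.choose_eq_zero_of_lt (by omega))
        have hpos : 0 < (C t).choose (t+1) := Nat.choose_pos (by omega)
        omega
      · have g1 := sumlt' t ht1 B (fun s a bb => hBmono s a (by omega)) hb2
        have g2 : (B t + 1).choose (t+1) ≤ (C t).choose (t+1) := Nat.choose_le_choose _ (by omega)
        omega
    · -- C t ≤ t : contradiction with c ≥ b + j
      have hQ : ∑ s ∈ Finset.Ioc 0 t, (C s).choose s ≤ t := by
        calc ∑ s ∈ Finset.Ioc 0 t, (C s).choose s ≤ ∑ s ∈ Finset.Ioc 0 t, 1 := by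
              apply Finset.sum_le_sum
              intro x hx
              rw [Finset.mem_Ioc] at hx
              have hxle : C x ≤ x := by
                have := gap' (m := t) (fun s a bb => hCmono s a (by omega)) t x hx.1 hx.2 (le_refl t)
                omega
              calc (C x).choose x ≤ x.choose x := Nat.choose_le_choose _ hxle
                _ = 1 := Nat.choose_self x
          _ = t := by simp
      have htj : t < j := by
        by_contra hh
        have hBt : B t = bseq t := by simp only [hBdef]; rw [if_pos (by omega)]
        have := hbge t (by omega) htd
        omega
      omega
  · -- backward direction
    rintro ⟨hj2, hcble⟩
    set D : ℕ → ℕ := fun s => if j ≤ s then bseq s else if j - (c-b) ≤ s then s else s - 1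
      with hDdef
    have hDmono : ∀ s, 1 ≤ s → s < d → D s < D (s+1) := by
      intro s h1 h2
      by_cases p : j ≤ s
      · have p' : j ≤ s+1 := by omega
        simp only [hDdef]
        rw [if_pos p, if_pos p']
        exact hbmono s p h2
      · by_cases p' : j ≤ s+1
        · have h3 : j = s+1 := by omega
          have h4 : s+1 ≤ bseq (s+1) := h3 ▸ hbbase
          simp only [hDdef]
          rw [if_neg p, if_pos p']
          split_ifs <;> omega
        · simp only [hDdef]
          rw [if_neg p, if_neg p']
          split_ifs <;> omega
    have hDsum : ∑ s ∈ Finset.Ioc 0 d, (D s).choose s = c := by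
      have hs1 := Finset.sum_Ioc_consecutive (fun s => (D s).choose s)
        (Nat.zero_le (j-1)) (show j-1 ≤ d by omega)
      have hs2 := Finset.sum_Ioc_consecutive (fun s => (D s).choose s)
        (Nat.zero_le (j-1-(c-b))) (show j-1-(c-b) ≤ j-1 by omega)
      have hupp : ∑ s ∈ Finset.Ioc (j-1) d, (D s).choose s = b := by
        have hIcc : Finset.Ioc (j-1) d = Finset.Icc j d := by
          ext x; simp only [Finset.mem_Ioc, Finset.mem_Icc]; omega
        rw [hIcc, hbrep]
        exact Finset.sum_congr rfl (fun x hx => by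
          rw [Finset.mem_Icc] at hx
          simp only [hDdef]
          rw [if_pos hx.1])
      have hzero : ∑ s ∈ Finset.Ioc 0 (j-1-(c-b)), (D s).choose s = 0 :=
        Finset.sum_eq_zero (fun s hs => by
          rw [Finset.mem_Ioc] at hs
          simp only [hDdef]
          rw [if_neg (by omega), if_neg (by omega)]
          exact Nat.choose_eq_zero_of_lt (by omega))
      have hones : ∑ s ∈ Finset.Ioc (j-1-(c-b)) (j-1), (D s).choose s = c - b := by
        have : ∀ s ∈ Finset.Ioc (j-1-(c-b)) (j-1), (D s).choose s = 1 := by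
          intro s hs
          rw [Finset.mem_Ioc] at hs
          simp only [hDdef]
          rw [if_neg (by omega), if_pos (by omega)]
          exact Nat.choose_self s
        rw [Finset.sum_congr rfl this]
        simp
        omega
      omega
    have hDC : ∀ s, 1 ≤ s → s ≤ d → C s = D s :=
      uniq d C D hCmono hDmono (by rw [hcC, hDsum])
    rw [← hfB, ← hfC]
    refine (Finset.sum_congr rfl (fun x hx => ?_)).symm
    rw [Finset.mem_Ioc] at hx
    rw [hDC x hx.1 hx.2]
    rcases Nat.lt_or_ge x j with h | h
    · have hxj : ¬ j ≤ x := by omega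
      simp only [hBdef, hDdef]
      rw [if_neg hxj, if_neg hxj]
      split_ifs with h2
      · rw [Nat.choose_eq_zero_of_lt (by omega), Nat.choose_eq_zero_of_lt (by omega)]
      · rfl
    · simp only [hBdef, hDdef]
      rw [if_pos h, if_pos h]
end

section
/- If a ≥ a' are positive integers and d is a positive integer, then a^⟨d⟩ ≥ a'^⟨d⟩, where for an integer with d-binomial expansion a = C(a_d, d) + ... + C(a_j, j), one sets a^⟨d⟩ = C(a_d+1, d+1) + ... + C(a_j+1, j+1). -/
open Finset

/-- If `aseq` is strictly increasing on `[j, d]`, each step gains at least 1. -/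
lemma macaulay_gapAux (aseq : ℕ → ℕ) (j d : ℕ)
    (hmono : ∀ s, j ≤ s → s < d → aseq s < aseq (s + 1)) :
    ∀ s t, j ≤ s → s + t ≤ d → aseq s + t ≤ aseq (s + t) := by
  intro s t
  induction t with
  | zero => intro _ _; simp
  | succ n ih =>
    intro hjs h
    have h1 := ih hjs (by omega)
    have h2 := hmono (s + n) (by omega) (by omega)
    have h3 : s + (n + 1) = (s + n) + 1 := by omega
    rw [h3]
    omega

/-- Hockey stick identity, diagonal form. -/
lemma macaulay_hockey (k : ℕ) : ∀ d, (∑ s ∈ Icc 1 d, (k + s).choose s) + 1 = (k + d + 1).choose d := by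
  intro d
  induction d with
  | zero => simp
  | succ n ih =>
    rw [Finset.sum_Icc_succ_top (by omega)]
    have hps : (k + (n + 1) + 1).choose (n + 1)
        = (k + n + 1).choose n + (k + n + 1).choose (n + 1) := by
      rw [show k + (n + 1) + 1 = (k + n + 1) + 1 from by ring]
      exact Nat.choose_succ_succ _ _
    simp only [show k + (n + 1) = k + n + 1 from by omega] at *
    omega

/-- A sum of binomials with strictly increasing tops bounded above by `N - 1`
is less than `C(N, d)`. -/
lemma macaulay_bound (aseq : ℕ → ℕ) (j d N : ℕ) (hj : 1 ≤ j) (hjd : j ≤ d)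
    (hmono : ∀ s, j ≤ s → s < d → aseq s < aseq (s + 1))
    (htop : aseq d < N) (hdN : d < N) :
    ∑ s ∈ Icc j d, (aseq s).choose s < N.choose d := by
  set k := N - 1 - d with hk
  have hterm : ∀ s ∈ Icc j d, (aseq s).choose s ≤ (k + s).choose s := by
    intro s hs
    simp only [mem_Icc] at hs
    have hgap := macaulay_gapAux aseq j d hmono s (d - s) hs.1 (by omega)
    rw [show s + (d - s) = d from by omega] at hgap
    exact Nat.choose_le_choose s (by omega)
  have h1 : ∑ s ∈ Icc j d, (aseq s).choose s ≤ ∑ s ∈ Icc j d, (k + s).choose s :=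
    Finset.sum_le_sum hterm
  have h2 : ∑ s ∈ Icc j d, (k + s).choose s ≤ ∑ s ∈ Icc 1 d, (k + s).choose s :=
    Finset.sum_le_sum_of_subset (Finset.Icc_subset_Icc_left hj)
  have h3 := macaulay_hockey k d
  rw [show k + d + 1 = N from by omega] at h3
  omega

/-- Shifting a sum over an interval. -/
lemma macaulay_shift (f : ℕ → ℕ) (a b : ℕ) :
    ∑ s ∈ Icc a b, f (s + 1) = ∑ t ∈ Icc (a + 1) (b + 1), f t := by
  rw [← Finset.map_add_right_Icc _ _ 1, Finset.sum_map]; rfl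

/-- Main induction: monotonicity of the Macaulay operator. -/
lemma macaulay_main : ∀ d i j (aseq a'seq : ℕ → ℕ), 1 ≤ i → i ≤ d → 1 ≤ j → j ≤ d →
    (∀ s, i ≤ s → s < d → aseq s < aseq (s + 1)) → i ≤ aseq i →
    (∀ s, j ≤ s → s < d → a'seq s < a'seq (s + 1)) → j ≤ a'seq j →
    (∑ s ∈ Icc j d, (a'seq s).choose s ≤ ∑ s ∈ Icc i d, (aseq s).choose s) →
    (∑ s ∈ Icc j d, (a'seq s + 1).choose (s + 1))
      ≤ ∑ s ∈ Icc i d, (aseq s + 1).choose (s + 1) := by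
  intro d
  induction d with
  | zero => intro i j _ _ hi hid _ _ _ _ _ _ _; omega
  | succ n ih =>
    intro i j aseq a'seq hi hid hj hjd hamono habase ha'mono ha'base hle
    -- the tops are at least their index
    have hAd : n + 1 ≤ aseq (n + 1) := by
      have := macaulay_gapAux aseq i (n + 1) hamono i (n + 1 - i) le_rfl (by omega)
      rw [show i + (n + 1 - i) = n + 1 from by omega] at this
      omega
    have hA'd : n + 1 ≤ a'seq (n + 1) := by
      have := macaulay_gapAux a'seq j (n + 1) ha'mono j (n + 1 - j) le_rfl (by omega)
      rw [show j + (n + 1 - j) = n + 1 from by omega] at this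
      omega
    -- top of a' is at most top of a
    have htops : a'seq (n + 1) ≤ aseq (n + 1) := by
      by_contra hcon
      push_neg at hcon
      have hb := macaulay_bound aseq i (n + 1) (a'seq (n + 1)) hi hid hamono hcon (by omega)
      have hs : (a'seq (n + 1)).choose (n + 1) ≤ ∑ s ∈ Icc j (n + 1), (a'seq s).choose s :=
        Finset.single_le_sum (f := fun s => (a'seq s).choose s)
          (fun _ _ => Nat.zero_le _) (a := n + 1) (Finset.mem_Icc.mpr (by omega))
      omega
    rcases lt_or_eq_of_le htops with hlt | heq
    · -- strictly smaller top: a'^⟨d⟩ < C(aseq d + 1, d + 1) ≤ a^⟨d⟩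
      have hrhs : (aseq (n + 1) + 1).choose (n + 2)
          ≤ ∑ s ∈ Icc i (n + 1), (aseq s + 1).choose (s + 1) := by
        have := Finset.single_le_sum (f := fun s => (aseq s + 1).choose (s + 1))
          (fun _ _ => Nat.zero_le _) (show n + 1 ∈ Icc i (n + 1) by simp [mem_Icc]; omega)
        simpa using this
      have hre : ∑ s ∈ Icc j (n + 1), (a'seq s + 1).choose (s + 1)
          = ∑ t ∈ Icc (j + 1) (n + 2), (a'seq (t - 1) + 1).choose t := by
        rw [← macaulay_shift (fun t => (a'seq (t - 1) + 1).choose t)]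
        exact Finset.sum_congr rfl (fun s _ => by simp)
      have hb : ∑ t ∈ Icc (j + 1) (n + 2), (a'seq (t - 1) + 1).choose t
          < (aseq (n + 1) + 1).choose (n + 2) :=
        macaulay_bound (fun t => a'seq (t - 1) + 1) (j + 1) (n + 2)
          (aseq (n + 1) + 1) (by omega) (by omega)
          (by
            intro t ht1 ht2
            have := ha'mono (t - 1) (by omega) (by omega)
            rw [show t - 1 + 1 = t from by omega] at this
            show a'seq (t - 1) + 1 < a'seq (t + 1 - 1) + 1
            rw [show t + 1 - 1 = t from by omega]
            omega)
          (by show a'seq (n + 2 - 1) + 1 < aseq (n + 1) + 1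
              rw [show n + 2 - 1 = n + 1 from by omega]; omega)
          (by omega)
      rw [hre]
      omega
    · -- equal tops
      by_cases hjtop : j = n + 1
      · subst hjtop
        rw [Finset.Icc_self, Finset.sum_singleton, heq]
        exact Finset.single_le_sum (f := fun s => (aseq s + 1).choose (s + 1))
          (fun _ _ => Nat.zero_le _) (Finset.mem_Icc.mpr (by omega))
      · have hjn : j ≤ n := by omega
        by_cases hitop : i = n + 1
        · -- impossible: a' would exceed a
          exfalso
          subst hitop
          rw [Finset.Icc_self, Finset.sum_singleton, ← heq] at hle
          rw [Finset.sum_Icc_succ_top (by omega)] at hle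
          have hpos : 0 < (a'seq j).choose j := Nat.choose_pos ha'base
          have hs : (a'seq j).choose j ≤ ∑ s ∈ Icc j n, (a'seq s).choose s :=
            Finset.single_le_sum (f := fun s => (a'seq s).choose s)
              (fun _ _ => Nat.zero_le _) (a := j) (Finset.mem_Icc.mpr (by omega))
          omega
        · have hin : i ≤ n := by omega
          rw [Finset.sum_Icc_succ_top (show j ≤ n + 1 from by omega),
            Finset.sum_Icc_succ_top (show i ≤ n + 1 from by omega), heq] at hle
          have htail : ∑ s ∈ Icc j n, (a'seq s).choose s ≤ ∑ s ∈ Icc i n, (aseq s).choose s := by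
            omega
          have := ih i j aseq a'seq hi hin hj hjn
            (fun s hs1 hs2 => hamono s hs1 (by omega)) habase
            (fun s hs1 hs2 => ha'mono s hs1 (by omega)) ha'base htail
          rw [Finset.sum_Icc_succ_top (show j ≤ n + 1 from by omega),
            Finset.sum_Icc_succ_top (show i ≤ n + 1 from by omega), heq]
          omega

/-- If `a ≥ a'` are positive integers and `d ≥ 1`, then
`a^⟨d⟩ ≥ a'^⟨d⟩`, where for an integer with `d`-binomial expansion
`a = C(a_d, d) + ... + C(a_j, j)` one sets
`a^⟨d⟩ = C(a_d + 1, d + 1) + ... + C(a_j + 1, j + 1)`. -/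
theorem stmt4 (a a' d i j : ℕ) (aseq a'seq : ℕ → ℕ)
    (ha : 0 < a) (ha' : 0 < a') (haa' : a' ≤ a) (hd : 1 ≤ d)
    (hi : 1 ≤ i) (hid : i ≤ d) (hj : 1 ≤ j) (hjd : j ≤ d)
    (hamono : ∀ s, i ≤ s → s < d → aseq s < aseq (s + 1)) (habase : i ≤ aseq i)
    (ha'mono : ∀ s, j ≤ s → s < d → a'seq s < a'seq (s + 1)) (ha'base : j ≤ a'seq j)
    (harep : a = ∑ s ∈ Finset.Icc i d, Nat.choose (aseq s) s)
    (ha'rep : a' = ∑ s ∈ Finset.Icc j d, Nat.choose (a'seq s) s) :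
    (∑ s ∈ Finset.Icc j d, Nat.choose (a'seq s + 1) (s + 1))
      ≤ ∑ s ∈ Finset.Icc i d, Nat.choose (aseq s + 1) (s + 1) := by
  exact macaulay_main d i j aseq a'seq hi hid hj hjd hamono habase ha'mono ha'base
    (by rw [harep, ha'rep] at haa'; exact haa')
end

section
/- If a monomial ideal I in S = k[x_1,...,x_n] has linear quotients (with respect to some order of its minimal monomial generators), then the ideal m·I also has linear quotients, where m = (x_1,...,x_n) is the graded maximal ideal. -/
open MvPolynomial

/-- An ideal of `k[x_1, ..., x_n]` is a monomial ideal if it is generated by monomials. -/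
def IsMonomialIdeal {n : ℕ} {k : Type*} [Field k] (I : Ideal (MvPolynomial (Fin n) k)) : Prop :=
  ∃ S : Set (Fin n →₀ ℕ), I = Ideal.span ((fun m => MvPolynomial.monomial m (1 : k)) '' S)

/-- `m` is a minimal monomial generator of the monomial ideal `I`. -/
def IsMinGen {n : ℕ} {k : Type*} [Field k] (I : Ideal (MvPolynomial (Fin n) k))
    (m : Fin n →₀ ℕ) : Prop :=
  MvPolynomial.monomial m (1 : k) ∈ I ∧
    ∀ m' : Fin n →₀ ℕ, m' ≤ m → m' ≠ m → MvPolynomial.monomial m' (1 : k) ∉ I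

/-- An ideal is generated by variables if it is the span of a set of variables. -/
def GenByVars {n : ℕ} {k : Type*} [Field k] (J : Ideal (MvPolynomial (Fin n) k)) : Prop :=
  ∃ T : Set (Fin n), J = Ideal.span ((fun i => (X i : MvPolynomial (Fin n) k)) '' T)

/-- A monomial ideal has linear quotients if its minimal monomial generators can be
ordered `u_1, ..., u_s` so that each colon ideal `(u_1, ..., u_{i-1}) : u_i` is
generated by variables. -/
def HasLinearQuotients {n : ℕ} {k : Type*} [Field k]
    (I : Ideal (MvPolynomial (Fin n) k)) : Prop :=
  ∃ (s : ℕ) (u : Fin s → (Fin n →₀ ℕ)), Function.Injective u ∧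
    (∀ t, IsMinGen I (u t)) ∧ (∀ m, IsMinGen I m → ∃ t, u t = m) ∧
    ∀ t : Fin s, GenByVars
      ((Ideal.span ((fun r : Fin s => MvPolynomial.monomial (u r) (1 : k)) '' {r | r < t})).colon
        (Ideal.span {MvPolynomial.monomial (u t) (1 : k)}))

/-!
Combinatorially, `u_1, …, u_s` have linear quotients iff for `r < t` some `x_b` divides
`u_r / gcd(u_r, u_t)` while `x_b u_t` is a multiple of some `u_r'` with `r' < t`. This survives
sorting the `u_t` by degree: a later `u_m` of smaller degree than `u_t` is traded, by induction
along the order, for an earlier generator dividing some `x_c u_m`. Once sorted, write each minimal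
generator of `m I` as `x_j u_i` with `u_i` the first generator dividing it, and order these by
`(i, j)` lexicographically. Against an earlier `x_l u_m`, either `m < i` and the witness `x_b` of
`u_i` works, because by the degree count `x_b x_j u_i` is a multiple of a minimal generator
attached to some `u` before `u_i`; or `m = i`, `l < j`, and `x_l` works.
-/

section

open Finsupp

variable {σ ι β : Type*}

lemma Finsupp.degree_strictMono : StrictMono (degree : (σ →₀ ℕ) → ℕ) := by
  intro v w h
  obtain ⟨c, rfl⟩ := le_iff_exists_add.1 h.le
  have hc : c ≠ 0 := by rintro rfl; simp at h
  rw [map_add]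
  exact Nat.lt_add_of_pos_right (Nat.pos_of_ne_zero ((degree_eq_zero_iff c).not.2 hc))

lemma Finsupp.exists_single_add_le_of_lt {v w : σ →₀ ℕ} (h : v < w) :
    ∃ b, single b 1 + v ≤ w := by
  obtain ⟨b, hb⟩ : ∃ b, v b < w b := by
    by_contra! hge
    exact h.ne (le_antisymm h.le fun b => hge b)
  refine ⟨b, fun a => ?_⟩
  rcases eq_or_ne a b with rfl | hab
  · simp only [Finsupp.add_apply, single_eq_same]
    omega
  · simpa [single_apply, hab.symm] using h.le a

def maxIdealMulExponents (u : ι → σ →₀ ℕ) : Set (σ →₀ ℕ) :=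
  Set.range fun p : ι × σ => single p.2 1 + u p.1

/-- Linear quotients of the monomials `u_t` listed along `key`, in combinatorial form: for `r`
before `t`, some `x_b` divides `u_r / gcd(u_r, u_t)` and lies in `(u_r' : r' before t) : u_t`. -/
def IsLinearQuotientOrder [LT β] (key : ι → β) (u : ι → σ →₀ ℕ) : Prop :=
  ∀ r t, key r < key t → ∃ b, u t b < u r b ∧ ∃ r', key r' < key t ∧ u r' ≤ single b 1 + u t

section Antichain

variable {u : ι → σ →₀ ℕ} (hu : ∀ r t, u r ≤ u t → r = t)
include hu

lemma ne_single_add (r t : ι) (b : σ) : u r ≠ single b 1 + u t := by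
  intro h
  obtain rfl := hu t r (h ▸ le_add_self)
  simpa using congrArg (· b) h

lemma degree_le_of_le_single_add {r t : ι} {b : σ} (h : u r ≤ single b 1 + u t) :
    degree (u r) ≤ degree (u t) := by
  have := degree_strictMono (lt_of_le_of_ne h (ne_single_add hu r t b))
  rw [map_add, degree_single] at this
  omega

variable [LinearOrder β] {key : ι → β}

lemma IsLinearQuotientOrder.exists_of_degree_lt [WellFoundedLT β]
    (hlq : IsLinearQuotientOrder key u) (hkey : Function.Injective key) {m t : ι}
    (hdeg : degree (u m) < degree (u t)) :
    ∃ b, u t b < u m b ∧ ∃ r', key r' < key t ∧ u r' ≤ single b 1 + u t := by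
  induction hm : key m using WellFoundedLT.induction generalizing m with
  | _ _ ih =>
  subst hm
  rcases lt_trichotomy (key m) (key t) with hmt | hmt | htm
  · exact hlq m t hmt
  · exact absurd (hkey hmt ▸ hdeg) (lt_irrefl _)
  · -- `u_m` is replaced by an earlier `u_r''` dividing `x_c u_m`, still of degree `< deg u_t`.
    obtain ⟨c, hc, r'', hr'', hle''⟩ := hlq t m htm
    have hdeg'' := (degree_le_of_le_single_add hu hle'').trans_lt hdeg
    obtain ⟨b, hb, r', hr', hle'⟩ := ih (key r'') hr'' hdeg'' rfl
    have hbc : b ≠ c := by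
      rintro rfl
      have := hle'' b
      simp only [Finsupp.add_apply, single_eq_same] at this
      omega
    have := hle'' b
    simp only [Finsupp.add_apply, single_eq_of_ne hbc, zero_add] at this
    exact ⟨b, by omega, r', hr', hle'⟩

theorem IsLinearQuotientOrder.degLex [WellFoundedLT β] (hlq : IsLinearQuotientOrder key u)
    (hkey : Function.Injective key) :
    IsLinearQuotientOrder (fun t => toLex (degree (u t), key t)) u := by
  intro r t hrt
  obtain ⟨b, hb, r', hr', hle⟩ : ∃ b, u t b < u r b ∧
      ∃ r', key r' < key t ∧ u r' ≤ single b 1 + u t := by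
    rcases Prod.Lex.toLex_lt_toLex.1 hrt with hdeg | ⟨-, hkrt⟩
    exacts [hlq.exists_of_degree_lt hu hkey hdeg, hlq r t hkrt]
  refine ⟨b, hb, r', Prod.Lex.toLex_lt_toLex.2 ?_, hle⟩
  exact (degree_le_of_le_single_add hu hle).lt_or_eq.imp_right (⟨·, hr'⟩)

end Antichain

section CanonicalPairs

variable [LinearOrder β] {key : ι → β} {u : ι → σ →₀ ℕ}

/-- `(t, b)` is the canonical way of writing the minimal generator `x_b u_t` of `m · (u_t)_t`:
`u_t` is the first generator, along `key`, that divides it. -/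
def IsCanonicalPair (key : ι → β) (u : ι → σ →₀ ℕ) (p : ι × σ) : Prop :=
  Minimal (· ∈ maxIdealMulExponents u) (single p.2 1 + u p.1) ∧
    ∀ t, key t < key p.1 → ¬ u t ≤ single p.2 1 + u p.1

lemma IsCanonicalPair.eq (hkey : Function.Injective key) {p q : ι × σ}
    (hp : IsCanonicalPair key u p) (hq : IsCanonicalPair key u q)
    (h : single p.2 1 + u p.1 = single q.2 1 + u q.1) : p = q := by
  have h₁ : p.1 = q.1 := hkey <| le_antisymm
    (not_lt.1 fun hlt => hp.2 _ hlt (h ▸ le_add_self))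
    (not_lt.1 fun hlt => hq.2 _ hlt (h.symm ▸ le_add_self))
  rw [h₁] at h
  exact Prod.ext h₁ (single_left_injective one_ne_zero (add_right_cancel h))

lemma injective_canonicalPairKey (hkey : Function.Injective key) :
    Function.Injective fun p : {p // IsCanonicalPair key u p} => toLex (key p.1.1, p.1.2) :=
  fun _ _ h => Subtype.ext (Prod.ext (hkey (congrArg (fun x => (ofLex x).1) h))
    (congrArg (fun x => (ofLex x).2) h))

variable (hu : ∀ r t, u r ≤ u t → r = t)
include hu

lemma exists_isCanonicalPair [Finite ι] {w : σ →₀ ℕ}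
    (hw : Minimal (· ∈ maxIdealMulExponents u) w) :
    ∃ p, IsCanonicalPair key u p ∧ single p.2 1 + u p.1 = w := by
  obtain ⟨⟨t₀, b₀⟩, hw₀⟩ := hw.prop
  obtain ⟨i, hi, hmin⟩ := Set.exists_min_image {t | u t ≤ w} key (Set.toFinite _)
    ⟨t₀, show u t₀ ≤ w from hw₀ ▸ le_add_self⟩
  obtain ⟨j, hj⟩ :=
    exists_single_add_le_of_lt (lt_of_le_of_ne hi (hw₀ ▸ ne_single_add hu i t₀ b₀))
  have hjw : single j 1 + u i = w := le_antisymm hj (hw.2 ⟨(i, j), rfl⟩ hj)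
  exact ⟨(i, j), ⟨hjw ▸ hw, fun t ht hle => (hmin t (hjw ▸ hle)).not_gt ht⟩, hjw⟩

lemma range_canonicalPairs [Finite ι] :
    Set.range (fun p : {p // IsCanonicalPair key u p} => single p.1.2 1 + u p.1.1) =
      {w | Minimal (· ∈ maxIdealMulExponents u) w} := by
  ext w
  constructor
  · rintro ⟨p, rfl⟩
    exact p.2.1
  · intro hw
    obtain ⟨p, hp, rfl⟩ := exists_isCanonicalPair (key := key) hu hw
    exact ⟨⟨p, hp⟩, rfl⟩

variable (hdeg : ∀ r t, key r ≤ key t → degree (u r) ≤ degree (u t))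
include hdeg

lemma exists_isCanonicalPair_lt_of_le_single_add [Finite ι] {i m : ι} {b : σ}
    (hm : key m < key i) (hle : u m ≤ single b 1 + u i) :
    ∃ p, IsCanonicalPair key u p ∧ key p.1 < key i ∧
      single p.2 1 + u p.1 ≤ single b 1 + u i := by
  obtain ⟨c, hc⟩ := exists_single_add_le_of_lt (lt_of_le_of_ne hle (ne_single_add hu m i b))
  obtain ⟨w, hw, hwmin⟩ :=
    exists_minimal_le_of_wellFoundedLT (· ∈ maxIdealMulExponents u) _ ⟨(m, c), rfl⟩
  obtain ⟨p, hp, rfl⟩ := exists_isCanonicalPair (key := key) hu hwmin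
  refine ⟨p, hp, ?_, hw.trans hc⟩
  rcases hw.eq_or_lt with heq | hlt
  · exact (not_lt.1 fun h => hp.2 m h (heq ▸ le_add_self)).trans_lt hm
  · -- otherwise `deg u_{p.1} < deg u_m ≤ deg u_i`, and `hdeg` puts `p.1` before `i`
    have hlt := degree_strictMono hlt
    simp only [map_add, degree_single] at hlt
    have := degree_le_of_le_single_add hu hle
    exact lt_of_not_ge fun h => by have := hdeg _ _ h; omega

variable [LinearOrder σ]

theorem IsLinearQuotientOrder.canonicalPairs [Finite ι] (hlq : IsLinearQuotientOrder key u)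
    (hkey : Function.Injective key) :
    IsLinearQuotientOrder (fun p : {p // IsCanonicalPair key u p} => toLex (key p.1.1, p.1.2))
      (fun p => single p.1.2 1 + u p.1.1) := by
  rintro ⟨⟨m, l⟩, hq⟩ ⟨⟨i, j⟩, hp⟩ hqp
  rcases Prod.Lex.toLex_lt_toLex.1 hqp with hmi | ⟨hmi, hlj⟩
  · obtain ⟨b, hb, m', hm', hle⟩ := hlq m i hmi
    have hbj : b ≠ j := by
      rintro rfl
      exact hp.2 m' hm' hle
    obtain ⟨p', hp', hp'i, hp'le⟩ := exists_isCanonicalPair_lt_of_le_single_add hu hdeg hm' hle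
    refine ⟨b, ?_, ⟨p', hp'⟩, Prod.Lex.toLex_lt_toLex.2 (Or.inl hp'i),
      hp'le.trans (add_le_add_right le_add_self _)⟩
    simp only [Finsupp.add_apply, single_apply, if_neg hbj.symm]
    omega
  · obtain rfl := hkey hmi
    refine ⟨l, ?_, ⟨(m, l), hq⟩, hqp, add_le_add_right le_add_self _⟩
    simp only [Finsupp.add_apply, single_apply, if_neg hlj.ne', if_pos]
    omega

end CanonicalPairs

section MonomialIdeals

variable {R : Type*} [CommSemiring R]

lemma monomial_mem_span_monomial_iff [Nontrivial R] {G : Set (σ →₀ ℕ)} {v : σ →₀ ℕ} :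
    monomial v (1 : R) ∈ Ideal.span ((fun g => monomial g (1 : R)) '' G) ↔ ∃ g ∈ G, g ≤ v := by
  classical
  simp [mem_ideal_span_monomial_image, coeff_monomial]

lemma span_monomial_setOf_minimal [Nontrivial R] (G : Set (σ →₀ ℕ)) :
    Ideal.span ((fun g => monomial g (1 : R)) '' {w | Minimal (· ∈ G) w}) =
      Ideal.span ((fun g => monomial g (1 : R)) '' G) := by
  refine le_antisymm (Ideal.span_mono (Set.image_mono fun w hw => hw.prop)) ?_
  rw [Ideal.span_le]
  rintro _ ⟨g, hg, rfl⟩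
  obtain ⟨w, hwg, hw⟩ := exists_minimal_le_of_wellFoundedLT (· ∈ G) g hg
  exact monomial_mem_span_monomial_iff.2 ⟨w, hw, hwg⟩

lemma span_range_X_mul_span_monomial (u : ι → σ →₀ ℕ) :
    Ideal.span (Set.range (X : σ → MvPolynomial σ R)) *
        Ideal.span ((fun g => monomial g (1 : R)) '' Set.range u) =
      Ideal.span ((fun g => monomial g (1 : R)) '' maxIdealMulExponents u) := by
  rw [Ideal.span_mul_span']
  congr 1
  ext f
  simp only [Set.mem_mul, Set.mem_range, Set.mem_image, maxIdealMulExponents]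
  constructor
  · rintro ⟨_, ⟨b, rfl⟩, _, ⟨_, ⟨t, rfl⟩, rfl⟩, rfl⟩
    exact ⟨_, ⟨(t, b), rfl⟩, by rw [X, monomial_mul, one_mul]⟩
  · rintro ⟨_, ⟨⟨t, b⟩, rfl⟩, rfl⟩
    exact ⟨_, ⟨b, rfl⟩, _, ⟨_, ⟨t, rfl⟩, rfl⟩, by rw [X, monomial_mul, one_mul]⟩

end MonomialIdeals

section LinearQuotients

variable {n : ℕ} {k : Type*} [Field k]

lemma isMinGen_span_monomial_iff (G : Set (Fin n →₀ ℕ)) (w : Fin n →₀ ℕ) :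
    IsMinGen (Ideal.span ((fun g => monomial g (1 : k)) '' G)) w ↔ Minimal (· ∈ G) w := by
  simp only [IsMinGen, monomial_mem_span_monomial_iff]
  constructor
  · rintro ⟨⟨g, hg, hgw⟩, hmin⟩
    obtain rfl : g = w := by_contra fun hne => hmin g hgw hne ⟨g, hg, le_rfl⟩
    refine ⟨hg, fun v hv hvg => by_contra fun h => ?_⟩
    exact hmin v hvg (fun e => h (e ▸ le_rfl)) ⟨v, hv, le_rfl⟩
  · intro hw
    refine ⟨⟨w, hw.prop, le_rfl⟩, fun v hvw hne ⟨g, hg, hgv⟩ => hne ?_⟩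
    exact le_antisymm hvw ((hw.2 hg (hgv.trans hvw)).trans hgv)

lemma IsMonomialIdeal.eq_span_setOf_isMinGen {I : Ideal (MvPolynomial (Fin n) k)}
    (hI : IsMonomialIdeal I) :
    I = Ideal.span ((fun m => monomial m (1 : k)) '' {m | IsMinGen I m}) := by
  obtain ⟨S, rfl⟩ := hI
  simp_rw [isMinGen_span_monomial_iff]
  exact (span_monomial_setOf_minimal S).symm

lemma IsMinGen.eq_of_le {J : Ideal (MvPolynomial (Fin n) k)} {v w : Fin n →₀ ℕ}
    (hv : IsMinGen J v) (hw : IsMinGen J w) (hvw : v ≤ w) : v = w :=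
  by_contra fun hne => hw.2 v hvw hne hv.1

lemma genByVars_colon_iff (A : Set (Fin n →₀ ℕ)) (v : Fin n →₀ ℕ) :
    GenByVars ((Ideal.span ((fun a => monomial a (1 : k)) '' A)).colon
        (Ideal.span {monomial v (1 : k)})) ↔
      ∀ a ∈ A, ∃ b, v b < a b ∧ ∃ a' ∈ A, a' ≤ single b 1 + v := by
  have hX (b : Fin n) : X b * monomial v (1 : k) = monomial (single b 1 + v) 1 := by
    rw [X, monomial_mul, one_mul]
  simp only [GenByVars]
  constructor
  · rintro ⟨T, hT⟩ a ha
    have hmem : monomial (a - v) (1 : k) ∈ Ideal.span (X '' T) := by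
      rw [← hT, Ideal.mem_colon_span_singleton, monomial_mul, one_mul,
        monomial_mem_span_monomial_iff]
      exact ⟨a, ha, le_tsub_add⟩
    obtain ⟨b, hbT, hb⟩ := mem_ideal_span_X_image.1 hmem (a - v) (by simp)
    have hXb : X b ∈ Ideal.span ((fun i => (X i : MvPolynomial (Fin n) k)) '' T) :=
      Ideal.subset_span ⟨b, hbT, rfl⟩
    rw [← hT, Ideal.mem_colon_span_singleton, hX, monomial_mem_span_monomial_iff] at hXb
    exact ⟨b, by simp only [tsub_apply] at hb; omega, hXb⟩
  · intro h
    refine ⟨{b | ∃ a' ∈ A, a' ≤ single b 1 + v}, le_antisymm (fun p hp => ?_) ?_⟩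
    · rw [Ideal.mem_colon_span_singleton, mem_ideal_span_monomial_image] at hp
      refine mem_ideal_span_X_image.2 fun e he => ?_
      obtain ⟨a, ha, hae⟩ := hp (e + v) (by
        rw [MvPolynomial.mem_support_iff, coeff_mul_monomial, mul_one]
        exact MvPolynomial.mem_support_iff.1 he)
      obtain ⟨b, hb, hbA⟩ := h a ha
      have := hae b
      simp only [Finsupp.add_apply] at this
      exact ⟨b, hbA, by omega⟩
    · rw [Ideal.span_le]
      rintro _ ⟨b, hb, rfl⟩
      rwa [SetLike.mem_coe, Ideal.mem_colon_span_singleton, hX, monomial_mem_span_monomial_iff]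

theorem hasLinearQuotients_iff {J : Ideal (MvPolynomial (Fin n) k)} :
    HasLinearQuotients J ↔ ∃ (s : ℕ) (u : Fin s → Fin n →₀ ℕ), Function.Injective u ∧
      Set.range u = {m | IsMinGen J m} ∧ IsLinearQuotientOrder id u := by
  have hcolon {s : ℕ} (u : Fin s → Fin n →₀ ℕ) (t : Fin s) :
      GenByVars ((Ideal.span ((fun r => monomial (u r) (1 : k)) '' {r | r < t})).colon
          (Ideal.span {monomial (u t) (1 : k)})) ↔
        ∀ r, r < t → ∃ b, u t b < u r b ∧ ∃ r', r' < t ∧ u r' ≤ single b 1 + u t := by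
    rw [← Set.image_image (fun a => monomial a (1 : k)) u, genByVars_colon_iff]
    simp only [Set.forall_mem_image, Set.exists_mem_image, Set.mem_ofPred_eq]
  simp only [HasLinearQuotients, hcolon, IsLinearQuotientOrder, id, Set.ext_iff, Set.mem_range,
    Set.mem_ofPred_eq]
  refine exists_congr fun s => exists_congr fun u => and_congr_right fun _ => ?_
  constructor
  · rintro ⟨hmin, hsurj, hlq⟩
    exact ⟨fun m => ⟨by rintro ⟨t, rfl⟩; exact hmin t, hsurj m⟩, fun r t hrt => hlq t r hrt⟩
  · rintro ⟨hrange, hlq⟩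
    exact ⟨fun t => (hrange _).1 ⟨t, rfl⟩, fun m => (hrange m).2, fun t r hrt => hlq r t hrt⟩

theorem hasLinearQuotients_of_isLinearQuotientOrder [Finite ι] [LinearOrder β]
    {J : Ideal (MvPolynomial (Fin n) k)} {key : ι → β} {u : ι → Fin n →₀ ℕ}
    (hkey : Function.Injective key) (hu : Function.Injective u)
    (hrange : Set.range u = {m | IsMinGen J m}) (hlq : IsLinearQuotientOrder key u) :
    HasLinearQuotients J := by
  let _ : LinearOrder ι := LinearOrder.lift' key hkey
  let _ : Fintype ι := Fintype.ofFinite ι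
  let e := Fintype.orderIsoFinOfCardEq ι rfl
  refine hasLinearQuotients_iff.2 ⟨_, u ∘ e, hu.comp e.injective, by rw [Set.range_comp,
    e.range_eq, Set.image_univ, hrange], fun r t hrt => ?_⟩
  obtain ⟨b, hb, r', hr', hle⟩ := hlq (e r) (e t) (e.lt_iff_lt.2 hrt)
  exact ⟨b, hb, e.symm r', by simpa using e.symm.strictMono (show r' < e t from hr'),
    by simpa using hle⟩

end LinearQuotients

end

/-- If a monomial ideal `I` in `S = k[x_1,...,x_n]` has linear quotients,
then `m·I` also has linear quotients, where `m = (x_1,...,x_n)` is the graded maximal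
ideal. -/
theorem stmt7 {n : ℕ} {k : Type*} [Field k] (I : Ideal (MvPolynomial (Fin n) k))
    (hI : IsMonomialIdeal I) (h : HasLinearQuotients I) :
    HasLinearQuotients
      (Ideal.span (Set.range (X : Fin n → MvPolynomial (Fin n) k)) * I) := by
  obtain ⟨s, u, hinj, hrange, hlq⟩ := hasLinearQuotients_iff.1 h
  have hu : ∀ r t, u r ≤ u t → r = t := fun r t hle =>
    hinj ((hrange.le ⟨r, rfl⟩).eq_of_le (hrange.le ⟨t, rfl⟩) hle)
  have hlq' := hlq.degLex hu Function.injective_id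
  have hkey : Function.Injective fun t => toLex (Finsupp.degree (u t), id t) := fun r t h =>
    congrArg (fun x => (ofLex x).2) h
  have hdeg : ∀ r t, toLex (Finsupp.degree (u r), id r) ≤ toLex (Finsupp.degree (u t), id t) →
      Finsupp.degree (u r) ≤ Finsupp.degree (u t) := fun r t h =>
    (Prod.Lex.toLex_le_toLex.1 h).elim le_of_lt (·.1.le)
  rw [hI.eq_span_setOf_isMinGen, ← hrange, span_range_X_mul_span_monomial]
  refine hasLinearQuotients_of_isLinearQuotientOrder (injective_canonicalPairKey hkey)
    (fun p q h => Subtype.ext (p.2.eq hkey q.2 h)) ?_ (hlq'.canonicalPairs hu hdeg hkey)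
  rw [range_canonicalPairs hu]
  exact Set.ext fun w => (isMinGen_span_monomial_iff _ w).symm
end

section
/- Every critical squarefree monomial ideal has linear quotients. -/
open MvPolynomial

/-- Critical squarefree monomial ideals, defined recursively:
base case `I = (x_i, m)` with `m` squarefree and `x_i ∤ m`; recursive case
`I = (x_j) + m'·J` where `J` is critical, `m'` is squarefree, `x_j ∤ m·m'` and
`supp(m) ∩ supp(m') = ∅` for every minimal generator `m` of `J`. -/
inductive IsCritical {n : ℕ} {k : Type*} [Field k] :
    Ideal (MvPolynomial (Fin n) k) → Prop
  | base (i : Fin n) (m : Fin n →₀ ℕ) (hsf : ∀ l, m l ≤ 1) (hi : i ∉ m.support) :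
      IsCritical (Ideal.span {(X i : MvPolynomial (Fin n) k),
        MvPolynomial.monomial m (1 : k)})
  | step (j : Fin n) (m' : Fin n →₀ ℕ) (hsf : ∀ l, m' l ≤ 1)
      (J : Ideal (MvPolynomial (Fin n) k)) (hJ : IsCritical J)
      (hj : ∀ m, IsMinGen J m → j ∉ (m + m').support)
      (hdisj : ∀ m, IsMinGen J m → Disjoint m.support m'.support) :
      IsCritical (Ideal.span {(X j : MvPolynomial (Fin n) k)} +
        Ideal.span {MvPolynomial.monomial m' (1 : k)} * J)

/-!
A monomial ideal minimally generated by `u_1, …, u_s` has linear quotients in this order as soon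
as, for all `r < t`, some `r' < t` has `u_{r'} : u_t = x_i` with `x_i ∣ u_r : u_t`, because
`(u_1, …, u_{t-1}) : u_t` is generated by the monomials `u_r : u_t = u_r / gcd(u_r, u_t)`.
Such orders propagate through the recursion defining critical ideals: for `(x_j) + m'·J` list
`x_j` first and then `m'u_1, …, m'u_s`. As `x_j` is coprime to every `m'u_t`, it lies in every
later colon ideal, and `m'u_r : m'u_t = u_r : u_t`. The base case `(x_i, m)` is `(x_i) + m·(1)`,
and the only degenerate case, `m'u_t = 1`, gives the unit ideal.
-/

open Finsupp

namespace MvPolynomial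

variable {σ R : Type*} [CommRing R]

variable (R) in
noncomputable abbrev monomialIdeal (B : Set (σ →₀ ℕ)) : Ideal (MvPolynomial σ R) :=
  Ideal.span ((fun b => monomial b (1 : R)) '' B)

theorem monomial_mem_monomialIdeal_iff [Nontrivial R] {B : Set (σ →₀ ℕ)} {a : σ →₀ ℕ} :
    monomial a (1 : R) ∈ monomialIdeal R B ↔ ∃ b ∈ B, b ≤ a := by
  classical
  simp [mem_ideal_span_monomial_image, coeff_monomial]

theorem monomialIdeal_le_monomialIdeal {B C : Set (σ →₀ ℕ)} (h : ∀ b ∈ B, ∃ c ∈ C, c ≤ b) :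
    monomialIdeal R B ≤ monomialIdeal R C := by
  refine Ideal.span_le.2 ?_
  rintro _ ⟨b, hb, rfl⟩
  refine mem_ideal_span_monomial_image.2 fun a ha => ?_
  rw [Finset.mem_singleton.1 (support_monomial_subset ha)]
  exact h b hb

theorem monomialIdeal_eq_top {B : Set (σ →₀ ℕ)} (h : 0 ∈ B) : monomialIdeal R B = ⊤ :=
  (Ideal.eq_top_iff_one _).2 (Ideal.subset_span ⟨0, h, one_def.symm⟩)

theorem span_X_image_eq_monomialIdeal (T : Set σ) :
    Ideal.span (X '' T) = monomialIdeal R ((fun i => single i 1) '' T) := by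
  rw [monomialIdeal, Set.image_image]
  rfl

theorem monomialIdeal_colon_monomial (B : Set (σ →₀ ℕ)) (a : σ →₀ ℕ) :
    (monomialIdeal R B).colon (Ideal.span {monomial a (1 : R)}) =
      monomialIdeal R ((· - a) '' B) := by
  ext p
  rw [Ideal.mem_colon_span_singleton, mem_ideal_span_monomial_image,
    mem_ideal_span_monomial_image]
  constructor
  · intro h d hd
    have hda : d + a ∈ (p * monomial a 1).support := by
      rwa [mem_support_iff, coeff_mul_monomial, mul_one, ← mem_support_iff]
    obtain ⟨b, hb, hbd⟩ := h _ hda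
    exact ⟨b - a, ⟨b, hb, rfl⟩, tsub_le_iff_right.2 hbd⟩
  · intro h c hc
    rw [mem_support_iff, coeff_mul_monomial', mul_one] at hc
    split_ifs at hc with hac
    · obtain ⟨_, ⟨b, hb, rfl⟩, hbc⟩ := h (c - a) (mem_support_iff.2 hc)
      exact ⟨b, hb, (tsub_le_iff_right.1 hbc).trans_eq (tsub_add_cancel_of_le hac)⟩
    · exact absurd rfl hc

theorem span_X_add_span_monomial_mul_monomialIdeal (j : σ) (m : σ →₀ ℕ) (B : Set (σ →₀ ℕ)) :
    Ideal.span {X j} + Ideal.span {monomial m (1 : R)} * monomialIdeal R B =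
      monomialIdeal R (insert (single j 1) ((· + m) '' B)) := by
  rw [Submodule.add_eq_sup, monomialIdeal, monomialIdeal, Set.image_insert_eq, Ideal.span_insert,
    Ideal.span_mul_span', Set.singleton_mul, Set.image_image, Set.image_image]
  congr 3
  funext b
  rw [monomial_mul, one_mul, add_comm]

end MvPolynomial

theorem isMinGen_monomialIdeal_iff {n : ℕ} {k : Type*} [Field k] {B : Set (Fin n →₀ ℕ)}
    (hB : IsAntichain (· ≤ ·) B) {m : Fin n →₀ ℕ} :
    IsMinGen (monomialIdeal k B) m ↔ m ∈ B := by
  simp only [IsMinGen, monomial_mem_monomialIdeal_iff]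
  constructor
  · rintro ⟨⟨b, hb, hbm⟩, hmin⟩
    by_contra hmB
    exact hmin b hbm (ne_of_mem_of_not_mem hb hmB) ⟨b, hb, le_rfl⟩
  · refine fun hm => ⟨⟨m, hm, le_rfl⟩, fun m' hm' hne ⟨b, hb, hbm'⟩ => hne ?_⟩
    obtain rfl := hB.eq hb hm (hbm'.trans hm')
    exact le_antisymm hm' hbm'

namespace Finsupp

variable {σ : Type*} {a : σ →₀ ℕ} {j : σ}

theorem single_one_tsub_of_apply_eq_zero (h : a j = 0) : single j 1 - a = single j 1 := by
  ext l
  by_cases hl : l = j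
  · subst hl
    simp [h]
  · simp [single_eq_of_ne' (Ne.symm hl)]

theorem eq_zero_of_le_single_one (hle : a ≤ single j 1) (h : a j = 0) : a = 0 := by
  have := tsub_add_cancel_of_le hle
  rwa [single_one_tsub_of_apply_eq_zero h, add_eq_left] at this

end Finsupp

/-- `u r - u t` is the exponent of the colon monomial `u_r : u_t`. -/
structure IsLinearQuotientOrder_s9 {σ : Type*} {s : ℕ} (u : Fin s → σ →₀ ℕ) : Prop where
  eq_of_le : ∀ r t, u r ≤ u t → r = t
  exists_single : ∀ t r, r < t →
    ∃ i, ∃ r' < t, u r' - u t = single i 1 ∧ single i 1 ≤ u r - u t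

namespace IsLinearQuotientOrder_s9

variable {σ : Type*} {s : ℕ} {u : Fin s → σ →₀ ℕ}

theorem injective (hu : IsLinearQuotientOrder_s9 u) : Function.Injective u :=
  fun r t h => hu.eq_of_le r t h.le

theorem isAntichain_range (hu : IsLinearQuotientOrder_s9 u) : IsAntichain (· ≤ ·) (Set.range u) := by
  rintro _ ⟨r, rfl⟩ _ ⟨t, rfl⟩ hne hle
  exact hne (congrArg u (hu.eq_of_le r t hle))

theorem colon_eq (hu : IsLinearQuotientOrder_s9 u) (R : Type*) [CommRing R] (t : Fin s) :
    (monomialIdeal R (u '' {r | r < t})).colon (Ideal.span {monomial (u t) (1 : R)}) =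
      Ideal.span (X '' {i | ∃ r < t, u r - u t = single i 1}) := by
  rw [monomialIdeal_colon_monomial, span_X_image_eq_monomialIdeal, Set.image_image]
  refine le_antisymm (monomialIdeal_le_monomialIdeal ?_) (monomialIdeal_le_monomialIdeal ?_)
  · rintro _ ⟨r, hr, rfl⟩
    obtain ⟨i, r', hr', heq, hle⟩ := hu.exists_single t r hr
    exact ⟨single i 1, ⟨i, ⟨r', hr', heq⟩, rfl⟩, hle⟩
  · rintro _ ⟨i, ⟨r, hr, heq⟩, rfl⟩
    exact ⟨u r - u t, ⟨r, hr, rfl⟩, heq.le⟩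

theorem hasLinearQuotients {n : ℕ} {k : Type*} [Field k] {u : Fin s → Fin n →₀ ℕ}
    (hu : IsLinearQuotientOrder_s9 u) : HasLinearQuotients (monomialIdeal k (Set.range u)) := by
  have hmin := fun m => isMinGen_monomialIdeal_iff (k := k) hu.isAntichain_range (m := m)
  refine ⟨s, u, hu.injective, fun t => (hmin _).2 ⟨t, rfl⟩, fun m hm => (hmin m).1 hm,
    fun t => ⟨{i | ∃ r < t, u r - u t = single i 1}, ?_⟩⟩
  rw [← Set.image_image (fun b => monomial b (1 : k)) u]
  exact hu.colon_eq k t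

theorem zero : IsLinearQuotientOrder_s9 (fun _ : Fin 1 => (0 : σ →₀ ℕ)) where
  eq_of_le r t _ := Subsingleton.elim r t
  exists_single t r h := absurd h (Subsingleton.elim r t ▸ lt_irrefl t)

theorem cons (hu : IsLinearQuotientOrder_s9 u) {j : σ} {m : σ →₀ ℕ} (hj : ∀ t, (u t + m) j = 0)
    (hne : ∀ t, u t + m ≠ 0) :
    IsLinearQuotientOrder_s9 (Fin.cons (single j 1) (fun t => u t + m) : Fin (s + 1) → σ →₀ ℕ) where
  eq_of_le r t hle := by
    cases r using Fin.cases with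
    | zero =>
      cases t using Fin.cases with
      | zero => rfl
      | succ t => simp [single_le_iff, hj t] at hle
    | succ r =>
      cases t using Fin.cases with
      | zero => exact absurd (eq_zero_of_le_single_one hle (hj r)) (hne r)
      | succ t =>
        simp only [Fin.cons_succ, add_le_add_iff_right] at hle
        rw [hu.eq_of_le r t hle]
  exists_single t r hrt := by
    cases t using Fin.cases with
    | zero => exact absurd hrt (Fin.not_lt_zero r)
    | succ t =>
      have hx : single j 1 - (u t + m) = single j 1 := single_one_tsub_of_apply_eq_zero (hj t)
      cases r using Fin.cases with
      | zero => exact ⟨j, 0, Fin.succ_pos t, hx, hx.ge⟩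
      | succ r =>
        obtain ⟨i, r', hr', heq, hle⟩ := hu.exists_single t r (Fin.succ_lt_succ_iff.1 hrt)
        refine ⟨i, r'.succ, Fin.succ_lt_succ_iff.2 hr', ?_, ?_⟩ <;>
          simpa only [Fin.cons_succ, add_tsub_add_eq_tsub_right]

theorem exists_span_X_add_mul (hu : IsLinearQuotientOrder_s9 u) {R : Type*} [CommRing R] {j : σ}
    {m : σ →₀ ℕ} (hj : ∀ t, (u t + m) j = 0) :
    ∃ (s' : ℕ) (v : Fin s' → σ →₀ ℕ),
      Ideal.span {X j} + Ideal.span {monomial m (1 : R)} * monomialIdeal R (Set.range u) =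
        monomialIdeal R (Set.range v) ∧ IsLinearQuotientOrder_s9 v := by
  rw [span_X_add_span_monomial_mul_monomialIdeal]
  by_cases h0 : ∃ t, u t + m = 0
  · obtain ⟨t, ht⟩ := h0
    refine ⟨1, fun _ => 0, ?_, zero⟩
    rw [Set.range_const, monomialIdeal_eq_top (Set.mem_singleton 0), monomialIdeal_eq_top]
    exact Set.mem_insert_of_mem _ ⟨u t, ⟨t, rfl⟩, ht⟩
  · push Not at h0
    refine ⟨s + 1, _, ?_, hu.cons hj h0⟩
    rw [Fin.range_cons, ← Set.range_comp]
    rfl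

end IsLinearQuotientOrder_s9

theorem IsCritical.exists_isLinearQuotientOrder {n : ℕ} {k : Type*} [Field k]
    {I : Ideal (MvPolynomial (Fin n) k)} (hI : IsCritical I) :
    ∃ (s : ℕ) (u : Fin s → Fin n →₀ ℕ),
      I = monomialIdeal k (Set.range u) ∧ IsLinearQuotientOrder_s9 u := by
  induction hI with
  | base i m _ hi =>
    have hI : Ideal.span {X i, monomial m (1 : k)} = Ideal.span {X i} +
        Ideal.span {monomial m 1} * monomialIdeal k (Set.range fun _ : Fin 1 => 0) := by
      rw [Set.range_const, monomialIdeal_eq_top (Set.mem_singleton 0), Ideal.mul_top,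
        Ideal.span_insert]
      rfl
    rw [hI]
    exact IsLinearQuotientOrder_s9.zero.exists_span_X_add_mul fun _ => by simpa using hi
  | step j m' _ J _ hj _ ih =>
    obtain ⟨s, u, rfl, hu⟩ := ih
    refine hu.exists_span_X_add_mul fun t => notMem_support_iff.1 (hj _ ?_)
    exact (isMinGen_monomialIdeal_iff hu.isAntichain_range).2 ⟨t, rfl⟩

/-- Every critical squarefree monomial ideal has linear quotients. -/
theorem stmt9 {n : ℕ} {k : Type*} [Field k] (I : Ideal (MvPolynomial (Fin n) k))
    (hI : IsCritical I) : HasLinearQuotients I := by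
  obtain ⟨s, u, rfl, hu⟩ := hI.exists_isLinearQuotientOrder
  exact hu.hasLinearQuotients
end

section
/- Let I ⊆ k[x_1,...,x_n] be the initial squarefree lexsegment ideal generated in degree q determined by the monomial v = x_{j_1}···x_{j_q} with 2 ≤ j_1 < ... < j_q ≤ n, and set A_t = [j_t] \ {j_1,...,j_{t-1}} for 1 ≤ t ≤ q. Then I has the minimal primary decomposition I = (∩_{t=1}^q (x_i : i ∈ A_t)) ∩ (∩ P_{F^c}), where the second intersection runs over all F ⊆ [n] with |F| = q-1 and F ∩ A_t ≠ ∅ for all t, and P_{F^c} is the prime ideal generated by the variables x_i with i ∉ F. -/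
open MvPolynomial

variable {k : Type*} [Field k]

/-- The squarefree monomial `x_F = ∏_{i ∈ F} x_i`. -/
noncomputable def sqMon (n : ℕ) (k : Type*) [Field k] (F : Finset (Fin n)) :
    MvPolynomial (Fin n) k :=
  ∏ i ∈ F, X i

/-- `x_F >_lex x_G` for squarefree monomials: at the smallest index where the supports
differ, the index belongs to `F`. -/
def sqGtLex {n : ℕ} (F G : Finset (Fin n)) : Prop :=
  ∃ a, a ∈ F ∧ a ∉ G ∧ ∀ b, b < a → (b ∈ F ↔ b ∈ G)

/-- `x_F ≥_lex x_G` for squarefree monomials. -/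
def sqGeLex {n : ℕ} (F G : Finset (Fin n)) : Prop :=
  F = G ∨ sqGtLex F G

/-- The squarefree lexsegment set `L(u,v)` of degree `q` (as a set of supports). -/
def sqLexSeg {n : ℕ} (q : ℕ) (u v : Finset (Fin n)) : Set (Finset (Fin n)) :=
  {w | w.card = q ∧ sqGeLex u w ∧ sqGeLex w v}

/-- The initial squarefree lexsegment set `L^i(v)` of degree `q`. -/
def sqLexSegInit {n : ℕ} (q : ℕ) (v : Finset (Fin n)) : Set (Finset (Fin n)) :=
  {w | w.card = q ∧ sqGeLex w v}

/-- The final squarefree lexsegment set `L^f(u)` of degree `q`. -/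
def sqLexSegFinal {n : ℕ} (q : ℕ) (u : Finset (Fin n)) : Set (Finset (Fin n)) :=
  {w | w.card = q ∧ sqGeLex u w}

/-- The squarefree monomial ideal generated by a set of supports. -/
noncomputable def sqIdeal (n : ℕ) (k : Type*) [Field k] (L : Set (Finset (Fin n))) :
    Ideal (MvPolynomial (Fin n) k) :=
  Ideal.span ((fun F => sqMon n k F) '' L)

/-- The monomial prime ideal `P_G` generated by the variables indexed by `G`. -/
noncomputable def varIdeal (n : ℕ) (k : Type*) [Field k] (G : Finset (Fin n)) :
    Ideal (MvPolynomial (Fin n) k) :=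
  Ideal.span ((fun i => (X i : MvPolynomial (Fin n) k)) '' (G : Set (Fin n)))

/-- The depth of `S/I`: the supremum of lengths of regular sequences on `S/I`
contained in the graded maximal ideal `(x_1, ..., x_n)`. -/
noncomputable def depthQ {n : ℕ} {k : Type*} [Field k]
    (I : Ideal (MvPolynomial (Fin n) k)) : ℕ :=
  sSup {r | ∃ rs : List (MvPolynomial (Fin n) k), rs.length = r ∧
    (∀ x ∈ rs, x ∈ Ideal.span (Set.range (X : Fin n → MvPolynomial (Fin n) k))) ∧
    RingTheory.Sequence.IsRegular (MvPolynomial (Fin n) k ⧸ I) rs}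

/-- A face of the Stanley–Reisner complex of the squarefree monomial ideal `I`. -/
def isFace {n : ℕ} (k : Type*) [Field k] (I : Ideal (MvPolynomial (Fin n) k))
    (F : Finset (Fin n)) : Prop :=
  sqMon n k F ∉ I

/-- A facet (maximal face) of the Stanley–Reisner complex of `I`. -/
def isFacet {n : ℕ} (k : Type*) [Field k] (I : Ideal (MvPolynomial (Fin n) k))
    (F : Finset (Fin n)) : Prop :=
  isFace k I F ∧ ∀ G, F ⊂ G → ¬ isFace k I G

/-!
A polynomial lies in the monomial ideal `(L^i(v))` iff the support `S` of each of its monomials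
contains some `w ≥_lex v` of size `q`, and in `P_G` iff each such `S` meets `G`. So the
decomposition is the combinatorial fact that `S` contains such a `w` iff `S` meets every `A_t`
and lies in no `(q-1)`-set `F` meeting every `A_t`.

If `w ≥_lex v` and `a` is the first index where `w` and `v` differ, then `a ∈ w ∖ v`, and
`w ∩ A_t` contains `a` when `a ≤ j_t` and `j_t` otherwise. Conversely, such an `S` has at least
`q` elements (else it could be enlarged to a forbidden `F`), and its `q` smallest elements
`e_1 < ⋯ < e_q` satisfy `w ≥_lex v`: if `e_r = j_r` for all `r < t`, an element of `S ∩ A_t`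
is `≤ j_t` and differs from `e_1, …, e_{t-1}`, which forces `e_t ≤ j_t`.
-/

open Finset

section MonomialIdeals

variable {n : ℕ}

theorem sqMon_eq_monomial (F : Finset (Fin n)) :
    sqMon n k F = monomial (∑ i ∈ F, Finsupp.single i 1) 1 := by
  rw [monomial_sum_one]
  rfl

theorem sum_single_one_le_iff (F : Finset (Fin n)) (m : Fin n →₀ ℕ) :
    ∑ i ∈ F, Finsupp.single i 1 ≤ m ↔ F ⊆ m.support := by
  classical
  simp only [Finsupp.le_def, Finsupp.finsetSum_apply, Finsupp.single_apply, sum_ite_eq',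
    subset_iff, Finsupp.mem_support_iff]
  refine ⟨fun h i hi => ?_, fun h i => ?_⟩
  · simpa [hi, Nat.one_le_iff_ne_zero] using h i
  · split_ifs with hi
    · exact Nat.one_le_iff_ne_zero.2 (h hi)
    · exact Nat.zero_le _

theorem mem_sqIdeal_iff (L : Set (Finset (Fin n))) (f : MvPolynomial (Fin n) k) :
    f ∈ sqIdeal n k L ↔ ∀ m ∈ f.support, ∃ w ∈ L, w ⊆ m.support := by
  rw [sqIdeal, funext sqMon_eq_monomial, ← Set.image_image (fun s => monomial s (1 : k)),
    mem_ideal_span_monomial_image]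
  simp only [Set.exists_mem_image, sum_single_one_le_iff]

theorem mem_varIdeal_iff (G : Finset (Fin n)) (f : MvPolynomial (Fin n) k) :
    f ∈ varIdeal n k G ↔ ∀ m ∈ f.support, (G ∩ m.support).Nonempty := by
  rw [varIdeal, mem_ideal_span_X_image]
  simp only [mem_coe, Finset.Nonempty, mem_inter, Finsupp.mem_support_iff]

end MonomialIdeals

theorem exists_strictMono_initial {α : Type*} [LinearOrder α] {q : ℕ} {S : Finset α}
    (hqS : q ≤ S.card) :
    ∃ e : Fin q → α, StrictMono e ∧ (∀ t, e t ∈ S) ∧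
      ∀ i ∈ S, ∀ t, i < e t → ∃ r < t, e r = i := by
  refine ⟨fun t => S.orderEmbOfFin rfl (Fin.castLE hqS t),
    fun a b hab => (S.orderEmbOfFin rfl).strictMono (Fin.strictMono_castLE hqS hab),
    fun t => S.orderEmbOfFin_mem rfl _, fun i hi t hit => ?_⟩
  obtain ⟨r, rfl⟩ : i ∈ Set.range (S.orderEmbOfFin rfl) := by
    rwa [range_orderEmbOfFin]
  have hrt : r < Fin.castLE hqS t := (S.orderEmbOfFin rfl).lt_iff_lt.1 hit
  exact ⟨⟨r, (Fin.lt_def.1 hrt).trans t.isLt⟩, hrt, rfl⟩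

section LexBlock

variable {n q : ℕ} {j : Fin q → Fin n}

/-- The set `A_t = [j_t] ∖ {j_1, …, j_{t-1}}`, with indices starting at `0`. -/
def lexBlock (j : Fin q → Fin n) (t : Fin q) : Finset (Fin n) :=
  (univ.filter (fun i : Fin n => i ≤ j t)) \ (image j (univ.filter (fun r : Fin q => r < t)))

theorem mem_lexBlock {t : Fin q} {i : Fin n} :
    i ∈ lexBlock j t ↔ i ≤ j t ∧ ∀ r < t, j r ≠ i := by
  simp [lexBlock]

theorem self_mem_lexBlock (hj : StrictMono j) (t : Fin q) : j t ∈ lexBlock j t :=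
  mem_lexBlock.2 ⟨le_rfl, fun _ hr => (hj hr).ne⟩

theorem lexBlock_inter_nonempty_of_sqGeLex (hj : StrictMono j) {w : Finset (Fin n)}
    (hw : sqGeLex w (univ.image j)) (t : Fin q) : (lexBlock j t ∩ w).Nonempty := by
  have hjv : j t ∈ univ.image j := mem_image_of_mem j (mem_univ t)
  rcases hw with rfl | ⟨a, haw, hav, hagree⟩
  · exact ⟨j t, mem_inter.2 ⟨self_mem_lexBlock hj t, hjv⟩⟩
  by_cases hat : a ≤ j t
  · refine ⟨a, mem_inter.2 ⟨mem_lexBlock.2 ⟨hat, fun r _ hra => hav ?_⟩, haw⟩⟩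
    exact hra ▸ mem_image_of_mem j (mem_univ r)
  · exact ⟨j t, mem_inter.2 ⟨self_mem_lexBlock hj t, (hagree _ (not_le.1 hat)).2 hjv⟩⟩

theorem sqGeLex_image_of_forall_le {e : Fin q → Fin n} (he : StrictMono e) (hj : StrictMono j)
    (h : ∀ t, (∀ r < t, e r = j r) → e t ≤ j t) : sqGeLex (univ.image e) (univ.image j) := by
  by_cases hall : ∀ t, e t = j t
  · exact Or.inl (by rw [funext hall])
  obtain ⟨t₀, ht₀, hmin⟩ :=
    WellFounded.has_min wellFounded_lt {t | e t ≠ j t} (not_forall.1 hall)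
  have hbelow : ∀ r < t₀, e r = j r := fun r hr => not_not.1 fun hne => hmin r hne hr
  have hlt : e t₀ < j t₀ := lt_of_le_of_ne (h t₀ hbelow) ht₀
  refine Or.inr ⟨e t₀, mem_image_of_mem e (mem_univ _), ?_, fun b hb => ?_⟩
  · simp only [mem_image, mem_univ, true_and, not_exists]
    intro s hs
    have hst : s < t₀ := hj.lt_iff_lt.1 (hs ▸ hlt)
    exact hst.ne (he.injective ((hbelow s hst).trans hs))
  · simp only [mem_image, mem_univ, true_and]
    constructor
    · rintro ⟨r, rfl⟩
      exact ⟨r, (hbelow r (he.lt_iff_lt.1 hb)).symm⟩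
    · rintro ⟨s, rfl⟩
      exact ⟨s, hbelow s (hj.lt_iff_lt.1 (hb.trans hlt))⟩

theorem le_of_lexBlock_inter_nonempty {S : Finset (Fin n)} {e : Fin q → Fin n}
    (he : ∀ i ∈ S, ∀ t, i < e t → ∃ r < t, e r = i) {t : Fin q}
    (hS : (lexBlock j t ∩ S).Nonempty) (hbelow : ∀ r < t, e r = j r) : e t ≤ j t := by
  by_contra! hjt
  obtain ⟨i, hi⟩ := hS
  obtain ⟨hiA, hiS⟩ := mem_inter.1 hi
  obtain ⟨hij, hi_ne⟩ := mem_lexBlock.1 hiA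
  obtain ⟨r, hr, hri⟩ := he _ hiS t (hij.trans_lt hjt)
  exact hi_ne r hr ((hbelow r hr).symm.trans hri)

theorem le_card_of_forall_not_subset (hj : StrictMono j) {S : Finset (Fin n)}
    (hS : ∀ t, (lexBlock j t ∩ S).Nonempty)
    (hF : ∀ F : Finset (Fin n), F.card = q - 1 → (∀ t, (F ∩ lexBlock j t).Nonempty) →
      ¬ S ⊆ F) :
    q ≤ S.card := by
  by_contra! hSq
  have hqn : q ≤ n := by simpa using Fintype.card_le_of_injective j hj.injective
  obtain ⟨F, hSF, hFq⟩ :=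
    exists_superset_card_eq (s := S) (n := q - 1) (by omega) (by simp; omega)
  refine hF F hFq (fun t => ?_) hSF
  rw [inter_comm]
  exact (hS t).mono (inter_subset_inter_left hSF)

theorem exists_mem_sqLexSegInit_subset_iff (hq : 0 < q) (hj : StrictMono j)
    (S : Finset (Fin n)) :
    (∃ w ∈ sqLexSegInit q (univ.image j), w ⊆ S) ↔
      (∀ t, (lexBlock j t ∩ S).Nonempty) ∧
      ∀ F : Finset (Fin n), F.card = q - 1 → (∀ t, (F ∩ lexBlock j t).Nonempty) → ¬ S ⊆ F := by
  constructor
  · rintro ⟨w, ⟨hwq, hwv⟩, hwS⟩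
    refine ⟨fun t => (lexBlock_inter_nonempty_of_sqGeLex hj hwv t).mono
      (inter_subset_inter_left hwS), fun F hFq _ hSF => ?_⟩
    have := card_le_card (hwS.trans hSF)
    omega
  · rintro ⟨hS, hF⟩
    obtain ⟨e, he, heS, he_init⟩ :=
      exists_strictMono_initial (le_card_of_forall_not_subset hj hS hF)
    refine ⟨univ.image e, ⟨?_, ?_⟩, ?_⟩
    · simp [card_image_of_injective _ he.injective]
    · exact sqGeLex_image_of_forall_le he hj fun t =>
        le_of_lexBlock_inter_nonempty he_init (hS t)
    · simpa [image_subset_iff] using heS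

end LexBlock

theorem stmt10_general {k : Type*} [Field k] (n q : ℕ) (hq : 0 < q) (j : Fin q → Fin n)
    (hmono : StrictMono j) :
    sqIdeal n k (sqLexSegInit q (Finset.image j Finset.univ)) =
      (⨅ t : Fin q, varIdeal n k
          ((Finset.univ.filter (fun i : Fin n => i ≤ j t)) \
            (Finset.image j (Finset.univ.filter (fun r : Fin q => r < t))))) ⊓
      (⨅ F ∈ {F : Finset (Fin n) | F.card = q - 1 ∧ ∀ t : Fin q,
          (F ∩ ((Finset.univ.filter (fun i : Fin n => i ≤ j t)) \
            (Finset.image j (Finset.univ.filter (fun r : Fin q => r < t))))).Nonempty},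
        varIdeal n k Fᶜ) := by
  change _ = (⨅ t, varIdeal n k (lexBlock j t)) ⊓
    ⨅ F ∈ {F : Finset (Fin n) | F.card = q - 1 ∧ ∀ t, (F ∩ lexBlock j t).Nonempty},
      varIdeal n k Fᶜ
  ext f
  simp only [mem_sqIdeal_iff, exists_mem_sqLexSegInit_subset_iff hq hmono, Ideal.mem_inf,
    Ideal.mem_iInf, mem_varIdeal_iff, Set.mem_ofPred_eq, ← not_disjoint_iff_nonempty_inter,
    disjoint_compl_left_iff, and_imp]
  exact ⟨fun h => ⟨fun t m hm => (h m hm).1 t, fun F hF hFA m hm => (h m hm).2 F hF hFA⟩,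
    fun h m hm => ⟨fun t => h.1 t m hm, fun F hF hFA => h.2 F hF hFA m hm⟩⟩

/-- minimal primary decomposition of an initial squarefree lexsegment ideal.
Here the variables are indexed `0, ..., n-1` (so `x_1` corresponds to index `0`), the
monomial `v = x_{j_1} ⋯ x_{j_q}` is given by the strictly increasing map `j`, the
hypothesis `1 ≤ j 0` encodes `2 ≤ j_1`, and `A t = [j_t] \ {j_1, ..., j_{t-1}}`. -/
theorem stmt10 {k : Type*} [Field k] (n q : ℕ) (hq : 0 < q) (j : Fin q → Fin n)
    (hmono : StrictMono j) (hj1 : 1 ≤ ((j ⟨0, hq⟩ : Fin n) : ℕ)) :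
    sqIdeal n k (sqLexSegInit q (Finset.image j Finset.univ)) =
      (⨅ t : Fin q, varIdeal n k
          ((Finset.univ.filter (fun i : Fin n => i ≤ j t)) \
            (Finset.image j (Finset.univ.filter (fun r : Fin q => r < t))))) ⊓
      (⨅ F ∈ {F : Finset (Fin n) | F.card = q - 1 ∧ ∀ t : Fin q,
          (F ∩ ((Finset.univ.filter (fun i : Fin n => i ≤ j t)) \
            (Finset.image j (Finset.univ.filter (fun r : Fin q => r < t))))).Nonempty},
        varIdeal n k Fᶜ) :=
  stmt10_general n q hq j hmono
end

section
/- Let I = (L^i(v)) ⊆ S = k[x_1,...,x_n] be an initial squarefree lexsegment ideal generated in degree q, determined by v = x_{j_1}···x_{j_q} with 2 ≤ j_1 < ... < j_q ≤ n. Then dim(S/I) = n - j_1. -/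
open MvPolynomial

variable {k : Type*} [Field k]

/-! Every generator of `L^i(v)` involves some `x_i` with `i ≤ min v`, so `S/I` surjects onto the
polynomial ring in the remaining `n - (min v + 1)` variables. Conversely, every prime `P ⊇ I`
contains at least `min v + 1` variables. Otherwise, either `x_a ∉ P` for some `a < min v`, and a
`q`-set through `a` avoiding the variables of `P` is lex-above `v`; or the variables in `P` are
exactly the `x_i` with `i < min v`, none of which divides `x_v ∈ P`. Setting the variables of
`P` to zero then bounds every chain of primes starting at `P` by the number of variables left. -/

theorem MvPolynomial.ker_killCompl {R σ τ : Type*} [CommRing R] {f : σ → τ}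
    (hf : Function.Injective f) :
    RingHom.ker (killCompl (R := R) hf) = Ideal.span (X '' (Set.range f)ᶜ) := by
  apply le_antisymm
  · intro p hp
    rw [mem_ideal_span_X_image]
    intro m hm
    by_contra! hsub
    have hm' : ↑m.support ⊆ Set.range f := fun i hi => by
      by_contra h
      exact Finsupp.mem_support_iff.mp hi (hsub i h)
    have := congrArg (coeff (m.comapDomain f hf.injOn)) (RingHom.mem_ker.mp hp)
    rw [coeff_killCompl, m.mapDomain_comapDomain f hf hm', coeff_zero] at this
    exact mem_support_iff.mp hm this
  · rw [Ideal.span_le]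
    rintro _ ⟨i, hi, rfl⟩
    rw [SetLike.mem_coe, RingHom.mem_ker, killCompl, aeval_X, dif_neg hi]

section KillVars

variable {σ : Type*}

noncomputable def killVars (T : Finset σ) :
    MvPolynomial σ k →ₐ[k] MvPolynomial {i // i ∉ T} k :=
  killCompl Subtype.val_injective

theorem killVars_surjective (T : Finset σ) : Function.Surjective (killVars (k := k) T) :=
  fun p => ⟨rename Subtype.val p, killCompl_rename_app _ p⟩

theorem ker_killVars (T : Finset σ) :
    RingHom.ker (killVars (k := k) T) = Ideal.span (X '' (T : Set σ)) := by
  rw [killVars, ker_killCompl, Subtype.range_coe_subtype, Set.compl_ofPred]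
  simp

variable [Fintype σ]

theorem ringKrullDim_mvPolynomial_subtype_notMem (T : Finset σ) :
    ringKrullDim (MvPolynomial {i // i ∉ T} k) = (Fintype.card σ - T.card : ℕ) := by
  classical
  rw [MvPolynomial.ringKrullDim_of_isNoetherianRing, ringKrullDim_eq_zero_of_field, zero_add,
    Nat.card_eq_fintype_card, Fintype.card_subtype_compl, Fintype.card_coe]

theorem LTSeries.length_le_ringKrullDim_of_surjective {R S : Type*} [CommRing R] [CommRing S]
    (f : R →+* S) (hf : Function.Surjective f) (p : LTSeries (PrimeSpectrum R))
    (hp : RingHom.ker f ≤ p.head.asIdeal) : (p.length : WithBot ℕ∞) ≤ ringKrullDim S := by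
  have hmem (i) : p i ∈ PrimeSpectrum.zeroLocus (RingHom.ker f : Set R) :=
    hp.trans (p.monotone (Fin.zero_le i))
  let p' : LTSeries (PrimeSpectrum.zeroLocus (RingHom.ker f : Set R)) :=
    ⟨p.length, fun i => ⟨p i, hmem i⟩, fun i => p.step i⟩
  rw [ringKrullDim,
    Order.krullDim_eq_of_orderIso (Ideal.primeSpectrumOrderIsoZeroLocusOfSurj f hf rfl)]
  exact Order.LTSeries.length_le_krullDim p'

theorem LTSeries.length_le_card_sub_of_X_mem
    (p : LTSeries (PrimeSpectrum (MvPolynomial σ k))) (T : Finset σ)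
    (hT : ∀ i ∈ T, X i ∈ p.head.asIdeal) : p.length ≤ Fintype.card σ - T.card := by
  have hker : RingHom.ker (killVars (k := k) T) ≤ p.head.asIdeal := by
    rw [ker_killVars, Ideal.span_le]
    rintro _ ⟨i, hi, rfl⟩
    exact hT i hi
  have := p.length_le_ringKrullDim_of_surjective _ (killVars_surjective T) hker
  rw [ringKrullDim_mvPolynomial_subtype_notMem] at this
  exact_mod_cast this

theorem ringKrullDim_quotient_le_of_forall_isPrime (I : Ideal (MvPolynomial σ k)) (d : ℕ)
    (h : ∀ P : Ideal (MvPolynomial σ k), P.IsPrime → I ≤ P →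
      ∃ T : Finset σ, Fintype.card σ ≤ d + T.card ∧ ∀ i ∈ T, X i ∈ P) :
    ringKrullDim (MvPolynomial σ k ⧸ I) ≤ d := by
  rw [ringKrullDim_quotient]
  refine iSup_le fun p => ?_
  let p' := p.map Subtype.val (Subtype.strictMono_coe _)
  obtain ⟨T, hcard, hT⟩ := h p.head.1.asIdeal p.head.1.isPrime p.head.2
  have := p'.length_le_card_sub_of_X_mem T hT
  exact_mod_cast (show p.length ≤ d by simp only [p', LTSeries.map_length] at this; omega)

theorem le_ringKrullDim_quotient_of_le_span_X (I : Ideal (MvPolynomial σ k)) (T : Finset σ)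
    (hI : I ≤ Ideal.span (X '' (T : Set σ))) :
    ((Fintype.card σ - T.card : ℕ) : WithBot ℕ∞) ≤
      ringKrullDim (MvPolynomial σ k ⧸ I) := by
  rw [← ringKrullDim_mvPolynomial_subtype_notMem (k := k)]
  have hker (a) (ha : a ∈ I) : killVars (k := k) T a = 0 := by
    rw [← RingHom.mem_ker, ker_killVars]
    exact hI ha
  exact ringKrullDim_le_of_surjective (Ideal.Quotient.lift I (killVars T).toRingHom hker)
    (Ideal.Quotient.lift_surjective_of_surjective _ _ (killVars_surjective T))

end KillVars

section LexSegment

variable {n : ℕ} (v : Finset (Fin n)) (hv : v.Nonempty)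

theorem exists_le_min'_of_mem_sqLexSegInit {q : ℕ} {w : Finset (Fin n)}
    (hw : w ∈ sqLexSegInit q v) : ∃ i ∈ w, i ≤ v.min' hv := by
  obtain ⟨-, rfl | ⟨a, haw, -, hagree⟩⟩ := hw
  · exact ⟨_, w.min'_mem hv, le_rfl⟩
  · rcases le_or_gt a (v.min' hv) with h | h
    · exact ⟨a, haw, h⟩
    · exact ⟨_, (hagree _ h).mpr (v.min'_mem hv), le_rfl⟩

theorem mem_sqLexSegInit_of_lt_min' {w : Finset (Fin n)} (hw : w.card = v.card) {a : Fin n}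
    (haw : a ∈ w) (ha : a < v.min' hv) : w ∈ sqLexSegInit v.card v := by
  have hlt : w.min' ⟨a, haw⟩ < v.min' hv := (w.min'_le a haw).trans_lt ha
  have hnot {b : Fin n} (hb : b < v.min' hv) : b ∉ v := fun h => (v.min'_le b h).not_gt hb
  refine ⟨hw, Or.inr ⟨w.min' ⟨a, haw⟩, w.min'_mem _, hnot hlt, fun b hb => ?_⟩⟩
  exact iff_of_false (fun h => (w.min'_le b h).not_gt hb) (hnot (hb.trans hlt))

theorem card_le_sub_min' : v.card ≤ n - v.min' hv := by
  rw [← Fin.card_Ici]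
  exact Finset.card_le_card fun i hi => Finset.mem_Ici.mpr (v.min'_le i hi)

theorem sqMon_mem_of_X_mem {J : Ideal (MvPolynomial (Fin n) k)} {w : Finset (Fin n)}
    {i : Fin n} (hi : i ∈ w) (hX : X i ∈ J) : sqMon n k w ∈ J := by
  rw [sqMon, ← Finset.mul_prod_erase w _ hi]
  exact J.mul_mem_right _ hX

theorem sqIdeal_sqLexSegInit_le_span_X (q : ℕ) :
    sqIdeal n k (sqLexSegInit q v) ≤ Ideal.span (X '' ↑(Finset.Iic (v.min' hv))) := by
  rw [sqIdeal, Ideal.span_le]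
  rintro _ ⟨w, hw, rfl⟩
  obtain ⟨i, hiw, hi⟩ := exists_le_min'_of_mem_sqLexSegInit v hv hw
  exact sqMon_mem_of_X_mem hiw (Ideal.subset_span ⟨i, Finset.mem_Iic.mpr hi, rfl⟩)

theorem exists_X_mem_of_sqIdeal_sqLexSegInit_le {P : Ideal (MvPolynomial (Fin n) k)}
    (hP : P.IsPrime) (hIP : sqIdeal n k (sqLexSegInit v.card v) ≤ P) :
    ∃ T : Finset (Fin n), (v.min' hv : ℕ) + 1 ≤ T.card ∧ ∀ i ∈ T, X i ∈ P := by
  classical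
  set T := Finset.univ.filter fun i => (X i : MvPolynomial (Fin n) k) ∈ P
  refine ⟨T, ?_, fun i hi => (Finset.mem_filter.mp hi).2⟩
  have hmeet {w : Finset (Fin n)} (hw : w ∈ sqLexSegInit v.card v) : ∃ i ∈ w, i ∈ T := by
    have : sqMon n k w ∈ P := hIP (Ideal.subset_span ⟨w, hw, rfl⟩)
    rw [sqMon, hP.prod_mem_iff] at this
    simpa [T] using this
  by_contra! hT
  by_cases hlow : ∀ a < v.min' hv, a ∈ T
  · have hTeq : T = Finset.Iio (v.min' hv) :=
      (Finset.eq_of_subset_of_card_le (fun a ha => hlow a (Finset.mem_Iio.mp ha))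
        (by rw [Fin.card_Iio]; omega)).symm
    obtain ⟨i, hiv, hiT⟩ := hmeet ⟨rfl, Or.inl rfl⟩
    rw [hTeq, Finset.mem_Iio] at hiT
    exact (v.min'_le i hiv).not_gt hiT
  · obtain ⟨a, ha, haT⟩ : ∃ a < v.min' hv, a ∉ T := by simpa using hlow
    have hcard : v.card ≤ Tᶜ.card := by
      have := card_le_sub_min' v hv
      rw [Finset.card_compl, Fintype.card_fin]
      omega
    obtain ⟨w, haw, hwT, hw⟩ := Finset.exists_subsuperset_card_eq
      (Finset.singleton_subset_iff.mpr (Finset.mem_compl.mpr haT))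
      (by simpa using Finset.card_pos.mpr hv) hcard
    obtain ⟨i, hiw, hiT⟩ :=
      hmeet (mem_sqLexSegInit_of_lt_min' v hv hw (haw (Finset.mem_singleton_self a)) ha)
    exact Finset.mem_compl.mp (hwT hiw) hiT

end LexSegment

theorem ringKrullDim_quotient_sqIdeal_sqLexSegInit {n : ℕ} (v : Finset (Fin n))
    (hv : v.Nonempty) :
    ringKrullDim (MvPolynomial (Fin n) k ⧸ sqIdeal n k (sqLexSegInit v.card v)) =
      ((n - ((v.min' hv : ℕ) + 1) : ℕ) : WithBot ℕ∞) := by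
  refine le_antisymm (ringKrullDim_quotient_le_of_forall_isPrime _ _ fun P hP hIP => ?_) ?_
  · obtain ⟨T, hT, hTP⟩ := exists_X_mem_of_sqIdeal_sqLexSegInit_le v hv hP hIP
    refine ⟨T, ?_, hTP⟩
    have := (v.min' hv).isLt
    rw [Fintype.card_fin]
    omega
  · have := le_ringKrullDim_quotient_of_le_span_X _ _
      (sqIdeal_sqLexSegInit_le_span_X (k := k) v hv v.card)
    rwa [Fintype.card_fin, Fin.card_Iic] at this

/-- Variables are indexed `0, ..., n-1`, so the paper's `j_1` is `(j 0 : ℕ) + 1`. -/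
theorem stmt11_general {k : Type*} [Field k] (n q : ℕ) (hq : 0 < q) (j : Fin q → Fin n)
    (hmono : StrictMono j) :
    ringKrullDim (MvPolynomial (Fin n) k ⧸
        sqIdeal n k (sqLexSegInit q (Finset.image j Finset.univ))) =
      ((n - (((j ⟨0, hq⟩ : Fin n) : ℕ) + 1) : ℕ) : WithBot (WithTop ℕ)) := by
  have hv : (Finset.image j Finset.univ).Nonempty :=
    ⟨j ⟨0, hq⟩, Finset.mem_image_of_mem _ (Finset.mem_univ _)⟩
  have hcard : (Finset.image j Finset.univ).card = q := by
    rw [Finset.card_image_of_injective _ hmono.injective, Finset.card_univ, Fintype.card_fin]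
  have hmin : (Finset.image j Finset.univ).min' hv = j ⟨0, hq⟩ := by
    rw [Finset.min'_image hmono.monotone]
    exact congrArg j (le_antisymm (Finset.min'_le _ _ (Finset.mem_univ _))
      (Fin.le_iff_val_le_val.mpr (Nat.zero_le _)))
  have := ringKrullDim_quotient_sqIdeal_sqLexSegInit (k := k) _ hv
  rwa [hcard, hmin] at this

/-- for the initial squarefree lexsegment ideal `I = (L^i(v))` in
`S = k[x_1, ..., x_n]` determined by `v = x_{j_1} ⋯ x_{j_q}` with
`2 ≤ j_1 < ... < j_q ≤ n`, one has `dim(S/I) = n - j_1`.  Variables are indexed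
`0, ..., n-1`, so `j_1` (1-based) equals `(j 0 : ℕ) + 1` and `n - j_1 = n - 1 - j 0`. -/
theorem stmt11 {k : Type*} [Field k] (n q : ℕ) (hq : 0 < q) (j : Fin q → Fin n)
    (hmono : StrictMono j) (hj1 : 1 ≤ ((j ⟨0, hq⟩ : Fin n) : ℕ)) :
    ringKrullDim (MvPolynomial (Fin n) k ⧸
        sqIdeal n k (sqLexSegInit q (Finset.image j Finset.univ))) =
      ((n - (((j ⟨0, hq⟩ : Fin n) : ℕ) + 1) : ℕ) : WithBot (WithTop ℕ)) :=
  stmt11_general n q hq j hmono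
end

section
/- Let u, v be monomials of degree d in S = k[x_1,...,x_n] with x_1 | u, u ≥_lex v, such that I = (L(u,v)) is a completely lexsegment ideal that is not an initial lexsegment ideal. Let j be the exponent of x_n in v and a = |Mon_d(S) \ L^i(u)|. Then I is a Gotzmann ideal if and only if a ≥ C(n+d-1, d) - (j+1). -/
open scoped Classical

/-- The exponent vector of a degree-`d` monomial (a multiset of `d` variables), in the
lexicographic order on `Fin n →₀ ℕ`: `mLex w < mLex w'` means `w <_lex w'`, i.e. at the
smallest variable index where the exponents differ, `w'` has the larger exponent. -/
noncomputable def mLex {n d : ℕ} (w : Sym (Fin n) d) : Lex (Fin n →₀ ℕ) :=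
  toLex (Multiset.toFinsupp (↑w : Multiset (Fin n)))

open Classical in
/-- The lexsegment set `L(u,v)` of degree-`d` monomials. -/
noncomputable def lexSegF {n d : ℕ} (u v : Sym (Fin n) d) : Finset (Sym (Fin n) d) :=
  Finset.univ.filter (fun w => mLex v ≤ mLex w ∧ mLex w ≤ mLex u)

open Classical in
/-- The shadow `{x_i · w : w ∈ L, 1 ≤ i ≤ n}` of a set of degree-`d` monomials. -/
noncomputable def shadF {n d : ℕ} (L : Finset (Sym (Fin n) d)) :
    Finset (Sym (Fin n) (d + 1)) :=
  Finset.image (fun p : Fin n × Sym (Fin n) d => Sym.cons p.1 p.2) (Finset.univ ×ˢ L)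

/-- Iterated shadow. -/
noncomputable def shadIterF {n d : ℕ} (L : Finset (Sym (Fin n) d)) :
    (m : ℕ) → Finset (Sym (Fin n) (d + m))
  | 0 => L
  | (m + 1) => shadF (shadIterF L m)

/-- A set of degree-`e` monomials is a lexsegment if it is lex-convex. -/
def IsLexSegF {n e : ℕ} (T : Finset (Sym (Fin n) e)) : Prop :=
  ∀ a b c : Sym (Fin n) e, a ∈ T → c ∈ T → mLex c ≤ mLex b → mLex b ≤ mLex a → b ∈ T

/-- A set `L` of degree-`d` monomials (minimally) generating an ideal `I` in one degree
is Gotzmann iff the number of generators of `m·I` (the cardinality of the shadow of `L`)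
equals the number of generators of `m·I^lex`, i.e. the cardinality of the shadow of the
initial (lex) segment of the same cardinality. -/
def IsGotzmannF {n d : ℕ} (L : Finset (Sym (Fin n) d)) : Prop :=
  ∀ T : Finset (Sym (Fin n) d), (∀ a b, a ∈ T → mLex a ≤ mLex b → b ∈ T) →
    T.card = L.card → (shadF T).card = (shadF L).card

namespace Aux
variable {n : ℕ}

noncomputable def cnt {e : ℕ} (w : Sym (Fin n) e) (k : Fin n) : ℕ :=
  Multiset.count k (↑w : Multiset (Fin n))

theorem mLex_lt_iff {e : ℕ} {a b : Sym (Fin n) e} :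
    mLex a < mLex b ↔ ∃ i, (∀ k, k < i → cnt a k = cnt b k) ∧ cnt a i < cnt b i :=
  Finsupp.lex_def

theorem mLex_injective {e : ℕ} : Function.Injective (mLex (n := n) (d := e)) := by
  intro a b h
  have := toLex.injective h
  have h2 : (↑a : Multiset (Fin n)) = ↑b := Multiset.toFinsupp.injective this
  exact Sym.coe_injective h2

theorem mLex_le_iff {e : ℕ} {a b : Sym (Fin n) e} :
    mLex a ≤ mLex b ↔ a = b ∨ mLex a < mLex b := by
  rw [le_iff_lt_or_eq]
  constructor
  · rintro (h | h); · exact Or.inr h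
    · exact Or.inl (mLex_injective h)
  · rintro (rfl | h); · exact Or.inr rfl
    · exact Or.inl h

theorem cnt_cons {e : ℕ} (i : Fin n) (w : Sym (Fin n) e) (k : Fin n) :
    cnt (i ::ₛ w) k = cnt w k + (if k = i then 1 else 0) := by
  simp [cnt, Sym.coe_cons, Multiset.count_cons]

theorem cnt_sum {e : ℕ} (w : Sym (Fin n) e) : ∑ k, cnt w k = e := by
  classical
  have h1 : (Multiset.toFinsupp (↑w : Multiset (Fin n))).sum (fun _ c => c)
      = Multiset.card (↑w : Multiset (Fin n)) := Multiset.toFinsupp_sum_eq _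
  rw [Finsupp.sum_fintype _ _ (fun _ => rfl)] at h1
  simpa [cnt, Sym.card_coe] using h1

/-- equality test from counts -/
theorem sym_eq_of_cnt_eq {e : ℕ} {a b : Sym (Fin n) e} (h : ∀ k, cnt a k = cnt b k) :
    a = b := by
  apply Sym.coe_injective
  exact Multiset.ext.2 fun k => h k

theorem mem_iff_cnt_pos {e : ℕ} {w : Sym (Fin n) e} {k : Fin n} :
    k ∈ w ↔ 0 < cnt w k := by
  rw [cnt, Multiset.count_pos]; exact ⟨fun h => h, fun h => h⟩

/-- cons is strictly monotone in the tail -/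
theorem mLex_cons_lt_cons_iff {e : ℕ} {i : Fin n} {a b : Sym (Fin n) e} :
    mLex (i ::ₛ a) < mLex (i ::ₛ b) ↔ mLex a < mLex b := by
  simp only [mLex_lt_iff]
  constructor
  · rintro ⟨i₀, hpre, hlt⟩
    refine ⟨i₀, fun k hk => ?_, ?_⟩
    · have := hpre k hk; simp only [cnt_cons] at this; omega
    · have := hlt; simp only [cnt_cons] at this; omega
  · rintro ⟨i₀, hpre, hlt⟩
    refine ⟨i₀, fun k hk => ?_, ?_⟩
    · have := hpre k hk; simp only [cnt_cons]; omega
    · simp only [cnt_cons]; omega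

theorem mLex_cons_le_cons_iff {e : ℕ} {i : Fin n} {a b : Sym (Fin n) e} :
    mLex (i ::ₛ a) ≤ mLex (i ::ₛ b) ↔ mLex a ≤ mLex b := by
  rw [mLex_le_iff, mLex_le_iff, mLex_cons_lt_cons_iff, Sym.cons_inj_right]

/-- cons with a smaller variable index gives a lex-larger monomial -/
theorem mLex_cons_le_cons_left {e : ℕ} {i i' : Fin n} (h : i' ≤ i) (w : Sym (Fin n) e) :
    mLex (i ::ₛ w) ≤ mLex (i' ::ₛ w) := by
  rcases eq_or_lt_of_le h with rfl | h
  · exact le_rfl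
  · apply le_of_lt
    rw [mLex_lt_iff]
    refine ⟨i', fun k hk => ?_, ?_⟩
    · simp only [cnt_cons]
      have h1 : k ≠ i := ne_of_lt (hk.trans h)
      have h2 : k ≠ i' := ne_of_lt hk
      simp [h1, h2]
    · simp only [cnt_cons]
      have h1 : i' ≠ i := ne_of_lt h
      simp [h1]

noncomputable def rk {e : ℕ} (w : Sym (Fin n) e) : ℕ :=
  (Finset.univ.filter fun x : Sym (Fin n) e => mLex w ≤ mLex x).card

theorem one_le_rk {e : ℕ} (w : Sym (Fin n) e) : 1 ≤ rk w :=
  Finset.card_pos.2 ⟨w, by simp [rk]⟩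

theorem rk_lt_rk {e : ℕ} {a b : Sym (Fin n) e} (h : mLex a < mLex b) : rk b < rk a := by
  rw [rk, rk]
  apply Finset.card_lt_card
  constructor
  · intro x hx
    simp only [rk, Finset.mem_filter, Finset.mem_univ, true_and] at hx ⊢
    exact le_of_lt (lt_of_lt_of_le h hx)
  · intro hsub
    have : a ∈ Finset.univ.filter fun x => mLex a ≤ mLex x := by simp
    have h2 := hsub this
    simp only [Finset.mem_filter] at h2
    exact absurd (lt_of_lt_of_le h h2.2) (lt_irrefl _)

theorem rk_le_rk {e : ℕ} {a b : Sym (Fin n) e} (h : mLex a ≤ mLex b) : rk b ≤ rk a := by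
  rw [rk, rk]
  apply Finset.card_le_card
  intro x hx
  simp only [Finset.mem_filter, Finset.mem_univ, true_and] at hx ⊢
  exact le_trans h hx

theorem mLex_le_of_rk_le {e : ℕ} {a b : Sym (Fin n) e} (h : rk b ≤ rk a) :
    mLex a ≤ mLex b := by
  by_contra hc
  push_neg at hc
  exact absurd (lt_of_le_of_lt h (rk_lt_rk hc)) (lt_irrefl _)


/-- sum over Fin n split at i -/
theorem sum_split_three (i : Fin n) (f : Fin n → ℕ) :
    ∑ k, f k = (∑ k ∈ Finset.univ.filter (· < i), f k) + f i
      + ∑ k ∈ Finset.univ.filter (i < ·), f k := by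
  classical
  rw [← Finset.sum_filter_add_sum_filter_not Finset.univ (· < i) f]
  have h : Finset.univ.filter (fun k => ¬ k < i) = insert i (Finset.univ.filter (i < ·)) := by
    ext k
    simp only [Finset.mem_filter, Finset.mem_univ, true_and, Finset.mem_insert, not_lt]
    constructor
    · intro hk
      rcases eq_or_lt_of_le hk with h1 | h1
      · exact Or.inl h1.symm
      · exact Or.inr h1
    · rintro (rfl | hk)
      · exact le_rfl
      · exact le_of_lt hk
  rw [h, Finset.sum_insert (by simp)]
  ring

/-- if two monomials of the same degree agree strictly below i and at i, and one has
no variables above i, they are equal -/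
theorem eq_of_agree_le {e : ℕ} {a b : Sym (Fin n) e} {i : Fin n}
    (hlt : ∀ k, k < i → cnt a k = cnt b k) (hi : cnt a i = cnt b i)
    (habove : ∀ k, i < k → cnt a k = 0) : a = b := by
  have hsa := cnt_sum a
  have hsb := cnt_sum b
  rw [sum_split_three i] at hsa hsb
  have h1 : ∑ k ∈ Finset.univ.filter (· < i), cnt a k
      = ∑ k ∈ Finset.univ.filter (· < i), cnt b k :=
    Finset.sum_congr rfl (fun k hk => hlt k (by simpa using hk))
  have h2 : ∑ k ∈ Finset.univ.filter (i < ·), cnt a k = 0 :=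
    Finset.sum_eq_zero (fun k hk => habove k (by simpa using hk))
  have h3 : ∑ k ∈ Finset.univ.filter (i < ·), cnt b k = 0 := by omega
  apply sym_eq_of_cnt_eq
  intro k
  rcases lt_trichotomy k i with h | rfl | h
  · exact hlt k h
  · exact hi
  · rw [habove k h, Finset.sum_eq_zero_iff.1 h3 k (by simpa using h)]

/-- cardinality of a lexsegment: |L(u,v)| + rk u = rk v + 1, given v ≤ u -/
theorem card_lexseg {e : ℕ} {u v : Sym (Fin n) e} (huv : mLex v ≤ mLex u)
    (L : Finset (Sym (Fin n) e))
    (hL : L = Finset.univ.filter (fun w => mLex v ≤ mLex w ∧ mLex w ≤ mLex u)) :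
    L.card + rk u = rk v + 1 := by
  classical
  have hsplit : (Finset.univ.filter fun x : Sym (Fin n) e => mLex v ≤ mLex x)
      = L ∪ (Finset.univ.filter fun x : Sym (Fin n) e => mLex u < mLex x) := by
    ext x
    simp only [hL, Finset.mem_filter, Finset.mem_univ, true_and, Finset.mem_union]
    constructor
    · intro hx
      rcases le_or_gt (mLex x) (mLex u) with h | h
      · exact Or.inl ⟨hx, h⟩
      · exact Or.inr h
    · rintro (⟨h1, _⟩ | h)
      · exact h1
      · exact le_trans huv (le_of_lt h)
  have hdisj : Disjoint L (Finset.univ.filter fun x : Sym (Fin n) e => mLex u < mLex x) := by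
    rw [Finset.disjoint_left]
    intro x hx hx2
    simp only [hL, Finset.mem_filter, Finset.mem_univ, true_and] at hx hx2
    exact absurd (lt_of_le_of_lt hx.2 hx2) (lt_irrefl _)
  have hins : (Finset.univ.filter fun x : Sym (Fin n) e => mLex u ≤ mLex x)
      = insert u (Finset.univ.filter fun x : Sym (Fin n) e => mLex u < mLex x) := by
    ext x
    simp only [Finset.mem_filter, Finset.mem_univ, true_and, Finset.mem_insert]
    constructor
    · intro hx
      rcases eq_or_lt_of_le hx with h | h
      · exact Or.inl (mLex_injective h.symm)
      · exact Or.inr h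
    · rintro (rfl | h)
      · exact le_rfl
      · exact le_of_lt h
  have hcard1 : rk v = L.card
      + (Finset.univ.filter fun x : Sym (Fin n) e => mLex u < mLex x).card := by
    rw [rk, hsplit, Finset.card_union_of_disjoint hdisj]
  have hcard2 : rk u = (Finset.univ.filter fun x : Sym (Fin n) e => mLex u < mLex x).card + 1 := by
    rw [rk, hins, Finset.card_insert_of_notMem (by simp)]
  omega

/-- a nonempty up-closed set is the initial segment of its minimum -/
theorem upclosed_eq_filter {e : ℕ} {T : Finset (Sym (Fin n) e)}
    (hup : ∀ a b, a ∈ T → mLex a ≤ mLex b → b ∈ T) (hne : T.Nonempty) :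
    ∃ w₀ ∈ T, T = Finset.univ.filter (fun x : Sym (Fin n) e => mLex w₀ ≤ mLex x) := by
  classical
  obtain ⟨w₀, hw₀, hmin⟩ := Finset.exists_min_image T mLex hne
  refine ⟨w₀, hw₀, ?_⟩
  ext x
  simp only [Finset.mem_filter, Finset.mem_univ, true_and]
  exact ⟨fun hx => hmin x hx, fun hx => hup w₀ x hw₀ hx⟩

/-- existence of up-closed sets of any cardinality -/
theorem exists_upclosed {e : ℕ} (c : ℕ) (hc : c ≤ Fintype.card (Sym (Fin n) e)) :
    ∃ T : Finset (Sym (Fin n) e), (∀ a b, a ∈ T → mLex a ≤ mLex b → b ∈ T) ∧ T.card = c := by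
  classical
  induction c with
  | zero => exact ⟨∅, by simp, rfl⟩
  | succ c ih =>
    obtain ⟨T, hup, hcard⟩ := ih (le_of_lt hc)
    have hlt : T.card < (Finset.univ : Finset (Sym (Fin n) e)).card := by
      rw [Finset.card_univ (α := Sym (Fin n) e)]; omega
    have hne : (Finset.univ \ T).Nonempty := by
      rw [Finset.sdiff_nonempty]
      intro hsub
      exact absurd (Finset.card_le_card hsub) (not_le.2 hlt)
    obtain ⟨a, ha, hmax⟩ := Finset.exists_max_image (Finset.univ \ T) mLex hne
    have haT : a ∉ T := (Finset.mem_sdiff.1 ha).2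
    refine ⟨insert a T, ?_, by rw [Finset.card_insert_of_notMem haT, hcard]⟩
    intro x y hx hxy
    rcases Finset.mem_insert.1 hx with rfl | hx
    · by_cases hyT : y ∈ T
      · exact Finset.mem_insert_of_mem hyT
      · have hy : y ∈ Finset.univ \ T := Finset.mem_sdiff.2 ⟨Finset.mem_univ _, hyT⟩
        have := hmax y hy
        have : mLex x = mLex y := le_antisymm hxy this
        rw [mLex_injective this] at *
        exact Finset.mem_insert_self _ _
    · exact Finset.mem_insert_of_mem (hup x y hx hxy)


theorem mem_shadF {d : ℕ} {L : Finset (Sym (Fin n) d)} {W : Sym (Fin n) (d + 1)} :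
    W ∈ shadF L ↔ ∃ i w, w ∈ L ∧ i ::ₛ w = W := by
  simp only [shadF, Finset.mem_image, Finset.mem_product, Finset.mem_univ, true_and,
    Prod.exists]

/-- the set of degree-(d+1) monomials ≥ i ::ₛ w containing i is in bijection with
the set of degree-d monomials ≥ w -/
theorem card_filter_cons {d : ℕ} (i : Fin n) (w : Sym (Fin n) d) :
    (Finset.univ.filter fun W : Sym (Fin n) (d + 1) =>
        mLex (i ::ₛ w) ≤ mLex W ∧ i ∈ W).card = rk w := by
  classical
  rw [rk]
  symm
  apply Finset.card_bij (fun (w' : Sym (Fin n) d) _ => i ::ₛ w')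
  · intro w' hw'
    simp only [Finset.mem_filter, Finset.mem_univ, true_and] at hw' ⊢
    exact ⟨mLex_cons_le_cons_iff.2 hw', Sym.mem_cons_self i w'⟩
  · intro a ha b hb hab
    exact (Sym.cons_inj_right i a b).1 hab
  · intro W hW
    simp only [Finset.mem_filter, Finset.mem_univ, true_and] at hW
    obtain ⟨t, ht⟩ := Sym.exists_cons_of_mem hW.2
    refine ⟨t, ?_, ht.symm⟩
    simp only [Finset.mem_filter, Finset.mem_univ, true_and]
    have := hW.1
    rw [ht] at this
    exact mLex_cons_le_cons_iff.1 this

/-- if W has fewer copies of x_0 than U it is lex-smaller -/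
theorem mLex_lt_of_cnt_zero_lt (hn : 0 < n) {e : ℕ} {W U : Sym (Fin n) e}
    (h : cnt W ⟨0, hn⟩ < cnt U ⟨0, hn⟩) : mLex W < mLex U := by
  rw [mLex_lt_iff]
  refine ⟨⟨0, hn⟩, fun k hk => ?_, h⟩
  exact absurd hk (by simp [Fin.lt_def])

/-- rk (x_0 ::ₛ u) = rk u -/
theorem rk_cons_zero (hn : 0 < n) {d : ℕ} (u : Sym (Fin n) d) :
    rk ((⟨0, hn⟩ : Fin n) ::ₛ u) = rk u := by
  classical
  rw [← card_filter_cons ⟨0, hn⟩ u, rk]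
  congr 1
  ext W
  simp only [Finset.mem_filter, Finset.mem_univ, true_and]
  constructor
  · intro hW
    refine ⟨hW, ?_⟩
    rw [mem_iff_cnt_pos]
    by_contra hc
    push_neg at hc
    have h0 : cnt W ⟨0, hn⟩ = 0 := Nat.le_zero.1 hc
    have h1 : 0 < cnt ((⟨0, hn⟩ : Fin n) ::ₛ u) ⟨0, hn⟩ := by
      rw [cnt_cons]; simp
    exact absurd (lt_of_le_of_lt hW (mLex_lt_of_cnt_zero_lt hn (by omega))) (lt_irrefl _)
  · exact fun h => h.1

/-- the extra part of the shadow count: monomials not divisible by x_{n-1} lying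
strictly above x_{n-1} · w -/
noncomputable def delta (hn : 0 < n) {d : ℕ} (w : Sym (Fin n) d) : ℕ :=
  (Finset.univ.filter fun W : Sym (Fin n) (d + 1) =>
    (⟨n - 1, by omega⟩ : Fin n) ∉ W ∧ mLex ((⟨n - 1, by omega⟩ : Fin n) ::ₛ w) < mLex W).card

/-- rk (x_last ::ₛ w) = rk w + delta w -/
theorem rk_cons_last (hn : 0 < n) {d : ℕ} (w : Sym (Fin n) d) :
    rk ((⟨n - 1, by omega⟩ : Fin n) ::ₛ w) = rk w + delta hn w := by
  classical
  set last : Fin n := ⟨n - 1, by omega⟩ with hlast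
  rw [rk, ← Finset.card_filter_add_card_filter_not
    (s := Finset.univ.filter fun W : Sym (Fin n) (d+1) => mLex (last ::ₛ w) ≤ mLex W)
    (p := fun W => last ∈ W)]
  congr 1
  · rw [← card_filter_cons last w]
    congr 1
    rw [Finset.filter_filter]
  · rw [delta]
    congr 1
    rw [Finset.filter_filter]
    ext W
    simp only [Finset.mem_filter, Finset.mem_univ, true_and]
    constructor
    · rintro ⟨h1, h2⟩
      refine ⟨h2, lt_of_le_of_ne h1 ?_⟩
      intro he
      have := mLex_injective he
      rw [← this] at h2
      exact h2 (Sym.mem_cons_self _ _)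
    · rintro ⟨h1, h2⟩
      exact ⟨le_of_lt h2, h1⟩

theorem le_last (hn : 0 < n) (k : Fin n) : k ≤ (⟨n - 1, by omega⟩ : Fin n) := by
  rw [Fin.le_def]
  have := k.isLt
  simp
  omega

theorem shad_initial (hn : 0 < n) {d : ℕ} (w₀ : Sym (Fin n) d) :
    shadF (Finset.univ.filter fun x : Sym (Fin n) d => mLex w₀ ≤ mLex x)
      = Finset.univ.filter fun W : Sym (Fin n) (d + 1) =>
          mLex ((⟨n - 1, by omega⟩ : Fin n) ::ₛ w₀) ≤ mLex W := by
  classical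
  set last : Fin n := ⟨n - 1, by omega⟩ with hlastdef
  ext W
  simp only [Finset.mem_filter, Finset.mem_univ, true_and]
  rw [mem_shadF]
  constructor
  · rintro ⟨i, w', hw', rfl⟩
    simp only [Finset.mem_filter, Finset.mem_univ, true_and] at hw'
    calc mLex (last ::ₛ w₀) ≤ mLex (last ::ₛ w') := mLex_cons_le_cons_iff.2 hw'
      _ ≤ mLex (i ::ₛ w') := mLex_cons_le_cons_left (le_last hn i) w'
  · intro hW
    rcases mLex_le_iff.1 hW with heq | hlt
    · exact ⟨last, w₀, by simp, heq⟩
    · obtain ⟨i₀, hpre, hlt₀⟩ := mLex_lt_iff.1 hlt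
      -- the largest variable occurring in W
      have hWne : ∃ a, a ∈ W := Sym.exists_mem W
      obtain ⟨a₀, ha₀⟩ := hWne
      have htne : (↑W : Multiset (Fin n)).toFinset.Nonempty :=
        ⟨a₀, Multiset.mem_toFinset.2 ha₀⟩
      obtain ⟨i, hiW', hmax'⟩ := Finset.exists_max_image _ id htne
      have hiW : i ∈ W := Multiset.mem_toFinset.1 hiW'
      have hmax : ∀ k, k ∈ W → k ≤ i := fun k hk =>
        hmax' k (Multiset.mem_toFinset.2 hk)
      obtain ⟨W1, hW1⟩ := Sym.exists_cons_of_mem hiW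
      have cntW : ∀ k, cnt W k = cnt W1 k + (if k = i then 1 else 0) := by
        intro k; rw [hW1, cnt_cons]
      have habove : ∀ k, i < k → cnt W1 k = 0 := by
        intro k hk
        have : k ∉ W1 := by
          intro hmem
          have : k ∈ W := by rw [hW1]; exact Sym.mem_cons_of_mem hmem
          exact absurd hk (not_lt.2 (hmax k this))
        rw [cnt, Multiset.count_eq_zero]
        intro hc; exact this (by rwa [Sym.mem_coe] at hc)
      have hi₀W : i₀ ∈ W := mem_iff_cnt_pos.2 (by omega)
      have hi₀i : i₀ ≤ i := hmax i₀ hi₀W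
      by_cases hc : i₀ = last
      · -- impossible by degree count
        exfalso
        have hprew : ∀ k, k < i₀ → cnt w₀ k = cnt W k := by
          intro k hk
          have h1 := hpre k hk
          rw [cnt_cons] at h1
          have hkl : k ≠ last := by rw [← hc]; exact ne_of_lt hk
          simpa [hkl] using h1
        have hlast : cnt w₀ i₀ + 1 < cnt W i₀ := by
          have h1 := hlt₀
          rw [cnt_cons, if_pos hc] at h1
          omega
        have hsw := cnt_sum w₀
        have hsW := cnt_sum W
        rw [sum_split_three i₀] at hsw hsW
        have hz1 : ∑ k ∈ Finset.univ.filter (i₀ < ·), cnt w₀ k = 0 :=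
          Finset.sum_eq_zero fun k hk => by
            have h2 : i₀ < k := by simpa using hk
            rw [hc] at h2
            exact absurd h2 (not_lt.2 (le_last hn k))
        have hz2 : ∑ k ∈ Finset.univ.filter (i₀ < ·), cnt W k = 0 :=
          Finset.sum_eq_zero fun k hk => by
            have h2 : i₀ < k := by simpa using hk
            rw [hc] at h2
            exact absurd h2 (not_lt.2 (le_last hn k))
        have heqsum : ∑ k ∈ Finset.univ.filter (· < i₀), cnt w₀ k
            = ∑ k ∈ Finset.univ.filter (· < i₀), cnt W k :=
          Finset.sum_congr rfl fun k hk => hprew k (by simpa using hk)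
        omega
      · have hi₀last : i₀ < last := lt_of_le_of_ne (le_last hn i₀) hc
        have hcnti₀ : cnt w₀ i₀ < cnt W i₀ := by
          have := hlt₀
          rw [cnt_cons] at this
          simpa [hc] using this
        have hprew : ∀ k, k < i₀ → cnt w₀ k = cnt W k := by
          intro k hk
          have h1 := hpre k hk
          rw [cnt_cons] at h1
          have hkl : k ≠ last := ne_of_lt (lt_trans hk hi₀last)
          simpa [hkl] using h1
        by_cases hci : i₀ = i
        · subst hci
          have hW1i : cnt w₀ i₀ ≤ cnt W1 i₀ := by
            have := cntW i₀; simp at this; omega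
          have hpreW1 : ∀ k, k < i₀ → cnt w₀ k = cnt W1 k := by
            intro k hk
            rw [hprew k hk, cntW k, if_neg (ne_of_lt hk)]
            omega
          rcases eq_or_lt_of_le hW1i with h2 | h2
          · have : W1 = w₀ := by
              apply eq_of_agree_le (i := i₀) (fun k hk => (hpreW1 k hk).symm) h2.symm
              exact habove
            refine ⟨i₀, w₀, by simp, ?_⟩
            rw [← this]; exact hW1.symm
          · refine ⟨i₀, W1, ?_, hW1.symm⟩
            simp only [Finset.mem_filter, Finset.mem_univ, true_and]
            apply le_of_lt
            rw [mLex_lt_iff]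
            exact ⟨i₀, hpreW1, h2⟩
        · have hi₀lti : i₀ < i := lt_of_le_of_ne hi₀i hci
          refine ⟨i, W1, ?_, hW1.symm⟩
          simp only [Finset.mem_filter, Finset.mem_univ, true_and]
          apply le_of_lt
          rw [mLex_lt_iff]
          refine ⟨i₀, fun k hk => ?_, ?_⟩
          · rw [hprew k hk, cntW k, if_neg (ne_of_lt (lt_trans hk hi₀lti))]
            omega
          · have h3 := cntW i₀
            rw [if_neg hci] at h3
            omega

section Pen
variable (hn2 : 2 ≤ n)

/-- `pen` : the penultimate variable index, `last` : the last -/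
private noncomputable def pen : Fin n := ⟨n - 2, by omega⟩
private noncomputable def lst : Fin n := ⟨n - 1, by omega⟩

theorem pen_lt_lst : pen hn2 < lst hn2 := by
  rw [Fin.lt_def]; simp [pen, lst]; omega

theorem pen_ne_lst : pen hn2 ≠ lst hn2 := ne_of_lt (pen_lt_lst hn2)

theorem lt_pen_of_lt_lst {k : Fin n} (h1 : k < lst hn2) (h2 : k ≠ pen hn2) :
    k < pen hn2 := by
  rw [Fin.lt_def] at h1 ⊢
  simp only [pen, lst] at *
  have : k.val ≠ n - 2 := fun hc => h2 (Fin.ext hc)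
  omega

theorem fin_trichotomy (i : Fin n) :
    i < pen hn2 ∨ i = pen hn2 ∨ i = lst hn2 := by
  rcases lt_trichotomy i (pen hn2) with h | h | h
  · exact Or.inl h
  · exact Or.inr (Or.inl h)
  · refine Or.inr (Or.inr ?_)
    apply Fin.ext
    have h1 := i.isLt
    rw [Fin.lt_def] at h
    simp only [pen, lst] at *
    omega

theorem eq_of_agree_below_top {e : ℕ} {a b : Sym (Fin n) e}
    (h : ∀ k, k < lst hn2 → cnt a k = cnt b k) : a = b := by
  have hn : 0 < n := by omega
  have hsa := cnt_sum a
  have hsb := cnt_sum b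
  rw [sum_split_three (lst hn2)] at hsa hsb
  have hz1 : ∑ k ∈ Finset.univ.filter (lst hn2 < ·), cnt a k = 0 :=
    Finset.sum_eq_zero fun k hk => by
      have h2 : lst hn2 < k := by simpa using hk
      exact absurd h2 (not_lt.2 (le_last hn k))
  have hz2 : ∑ k ∈ Finset.univ.filter (lst hn2 < ·), cnt b k = 0 :=
    Finset.sum_eq_zero fun k hk => by
      have h2 : lst hn2 < k := by simpa using hk
      exact absurd h2 (not_lt.2 (le_last hn k))
  have heqs : ∑ k ∈ Finset.univ.filter (· < lst hn2), cnt a k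
      = ∑ k ∈ Finset.univ.filter (· < lst hn2), cnt b k :=
    Finset.sum_congr rfl fun k hk => h k (by simpa using hk)
  apply sym_eq_of_cnt_eq
  intro k
  rcases lt_trichotomy k (lst hn2) with hk | hk | hk
  · exact h k hk
  · rw [hk]; omega
  · exact absurd hk (not_lt.2 (le_last hn k))

/-- successor lemma: if v' is obtained from v by moving one x_last to x_pen,
then v' is the immediate lex-successor of v -/
theorem rk_succ_step {e : ℕ} {v v' : Sym (Fin n) e}
    (h1 : cnt v' (pen hn2) = cnt v (pen hn2) + 1)
    (h2 : cnt v' (lst hn2) + 1 = cnt v (lst hn2))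
    (h3 : ∀ k, k ≠ pen hn2 → k ≠ lst hn2 → cnt v' k = cnt v k) :
    rk v = rk v' + 1 := by
  classical
  have hvlt : mLex v < mLex v' := by
    rw [mLex_lt_iff]
    refine ⟨pen hn2, fun k hk => ?_, by omega⟩
    exact (h3 k (ne_of_lt hk) (ne_of_lt (hk.trans (pen_lt_lst hn2)))).symm
  have hstep : ∀ x : Sym (Fin n) e, mLex v < mLex x → mLex v' ≤ mLex x := by
    intro x hx
    obtain ⟨i₀, hpre, hlt₀⟩ := mLex_lt_iff.1 hx
    rcases fin_trichotomy hn2 i₀ with htri | htri | htri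
    · apply le_of_lt
      rw [mLex_lt_iff]
      refine ⟨i₀, fun k hk => ?_, ?_⟩
      · rw [h3 k (ne_of_lt (hk.trans htri))
          (ne_of_lt ((hk.trans htri).trans (pen_lt_lst hn2)))]
        exact hpre k hk
      · rw [h3 i₀ (ne_of_lt htri) (ne_of_lt (htri.trans (pen_lt_lst hn2)))]
        exact hlt₀
    · subst htri
      have hxpen : cnt v' (pen hn2) ≤ cnt x (pen hn2) := by omega
      rcases eq_or_lt_of_le hxpen with hxe | hxl
      · -- x = v'
        have : v' = x := by
          apply eq_of_agree_below_top hn2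
          intro k hk
          rcases eq_or_ne k (pen hn2) with rfl | hkp
          · exact hxe
          · rw [h3 k hkp (ne_of_lt hk)]
            exact hpre k (lt_pen_of_lt_lst hn2 hk hkp)
        rw [this]
      · apply le_of_lt
        rw [mLex_lt_iff]
        refine ⟨pen hn2, fun k hk => ?_, hxl⟩
        rw [h3 k (ne_of_lt hk) (ne_of_lt (hk.trans (pen_lt_lst hn2)))]
        exact hpre k hk
    · exfalso
      subst htri
      have : v = x := by
        apply eq_of_agree_below_top hn2
        intro k hk
        exact hpre k hk
      rw [this] at hlt₀
      omega
  have hins : (Finset.univ.filter fun x : Sym (Fin n) e => mLex v ≤ mLex x)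
      = insert v (Finset.univ.filter fun x : Sym (Fin n) e => mLex v' ≤ mLex x) := by
    ext x
    simp only [Finset.mem_filter, Finset.mem_univ, true_and, Finset.mem_insert]
    constructor
    · intro hx
      rcases mLex_le_iff.1 hx with heq | hlt
      · exact Or.inl heq.symm
      · exact Or.inr (hstep x hlt)
    · rintro (rfl | hx)
      · exact le_rfl
      · exact le_trans (le_of_lt hvlt) hx
  rw [rk, hins, Finset.card_insert_of_notMem, rk]
  simp only [Finset.mem_filter, Finset.mem_univ, true_and]
  intro hc
  exact absurd (lt_of_lt_of_le hvlt hc) (lt_irrefl _)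

/-- vhat: move all x_last's to x_pen -/
noncomputable def vhat {e : ℕ} (v : Sym (Fin n) e) : Sym (Fin n) e :=
  ⟨Multiset.map (fun i => if i = lst hn2 then pen hn2 else i) (↑v : Multiset (Fin n)),
    by rw [Multiset.card_map, Sym.card_coe]⟩

theorem count_map_replace (p q : Fin n) (hpq : p ≠ q) (s : Multiset (Fin n)) (k : Fin n) :
    Multiset.count k (Multiset.map (fun i => if i = p then q else i) s)
      = if k = p then 0 else if k = q then Multiset.count q s + Multiset.count p s
        else Multiset.count k s := by
  classical
  induction s using Multiset.induction with
  | empty => simp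
  | cons a t ih =>
    rw [Multiset.map_cons, Multiset.count_cons, ih, Multiset.count_cons,
      Multiset.count_cons, Multiset.count_cons]
    rcases eq_or_ne a p with rfl | hap
    · simp only [if_pos rfl]
      rcases eq_or_ne k a with rfl | hka
      · simp [hpq, Ne.symm hpq]
      · rcases eq_or_ne k q with rfl | hkq
        · simp [hka, Ne.symm hka]; omega
        · simp [hka, hkq]
    · rw [if_neg hap]
      rcases eq_or_ne k p with rfl | hkp
      · simp [Ne.symm hap, hap]
      · rcases eq_or_ne k q with rfl | hkq
        · rcases eq_or_ne k a with rfl | hka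
          · simp [hkp, Ne.symm hap]; omega
          · simp [hkp, hka, Ne.symm hka, Ne.symm hap]
        · simp [hkp, hkq]

theorem cnt_vhat {e : ℕ} (v : Sym (Fin n) e) (k : Fin n) :
    cnt (vhat hn2 v) k = if k = lst hn2 then 0
      else if k = pen hn2 then cnt v (pen hn2) + cnt v (lst hn2)
      else cnt v k := by
  rw [cnt, vhat]
  exact count_map_replace (lst hn2) (pen hn2) (Ne.symm (pen_ne_lst hn2)) _ k

theorem vhat_eq_of_no_lst {e : ℕ} {v : Sym (Fin n) e} (h : cnt v (lst hn2) = 0) :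
    vhat hn2 v = v := by
  apply sym_eq_of_cnt_eq
  intro k
  rw [cnt_vhat]
  rcases eq_or_ne k (lst hn2) with rfl | hk1
  · simp [h]
  · rcases eq_or_ne k (pen hn2) with rfl | hk2
    · simp [hk1, h]
    · simp [hk1, hk2]

theorem mLex_le_vhat {e : ℕ} (v : Sym (Fin n) e) : mLex v ≤ mLex (vhat hn2 v) := by
  rcases Nat.eq_zero_or_pos (cnt v (lst hn2)) with h | h
  · rw [vhat_eq_of_no_lst hn2 h]
  · apply le_of_lt
    rw [mLex_lt_iff]
    refine ⟨pen hn2, fun k hk => ?_, ?_⟩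
    · rw [cnt_vhat]
      rw [if_neg (ne_of_lt (hk.trans (pen_lt_lst hn2))), if_neg (ne_of_lt hk)]
    · rw [cnt_vhat, if_neg (pen_ne_lst hn2), if_pos rfl]
      omega

theorem cnt_vhat_lst {e : ℕ} (v : Sym (Fin n) e) : cnt (vhat hn2 v) (lst hn2) = 0 := by
  rw [cnt_vhat, if_pos rfl]

/-- the rank identity : rk v = rk (vhat v) + (exponent of x_last in v) -/
theorem rk_vhat {e : ℕ} (v : Sym (Fin n) e) :
    rk v = rk (vhat hn2 v) + cnt v (lst hn2) := by
  classical
  generalize hj : cnt v (lst hn2) = j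
  induction j generalizing v with
  | zero => rw [vhat_eq_of_no_lst hn2 hj]; omega
  | succ j ih =>
    -- v' : one x_last moved to x_pen
    have hmem : lst hn2 ∈ (↑v : Multiset (Fin n)) := by
      rw [← Multiset.count_pos, ← cnt, hj]; omega
    set s' : Multiset (Fin n) := pen hn2 ::ₘ (↑v : Multiset (Fin n)).erase (lst hn2) with hs'
    have hepos : 0 < e := by
      rw [← Sym.card_coe (s := v)]
      exact Multiset.card_pos_iff_exists_mem.2 ⟨_, hmem⟩
    have hcard : Multiset.card s' = e := by
      rw [hs', Multiset.card_cons, Multiset.card_erase_of_mem hmem, Sym.card_coe]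
      exact Nat.succ_pred_eq_of_pos hepos
    set v' : Sym (Fin n) e := ⟨s', hcard⟩ with hv'
    have hcnt' : ∀ k, cnt v' k
        = (if k = pen hn2 then 1 else 0) + Multiset.count k ((↑v : Multiset (Fin n)).erase (lst hn2)) := by
      intro k
      rw [cnt, hv']
      show Multiset.count k s' = _
      rw [hs', Multiset.count_cons]
      rcases eq_or_ne k (pen hn2) with rfl | hk
      · simp; omega
      · simp [hk]
    have h1 : cnt v' (pen hn2) = cnt v (pen hn2) + 1 := by
      rw [hcnt', if_pos rfl, Multiset.count_erase_of_ne (pen_ne_lst hn2), cnt]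
      omega
    have h2 : cnt v' (lst hn2) + 1 = cnt v (lst hn2) := by
      rw [hcnt', if_neg (Ne.symm (pen_ne_lst hn2)), Multiset.count_erase_self, cnt]
      rw [cnt] at hj
      omega
    have h3 : ∀ k, k ≠ pen hn2 → k ≠ lst hn2 → cnt v' k = cnt v k := by
      intro k hk1 hk2
      rw [hcnt', if_neg hk1, Multiset.count_erase_of_ne hk2, cnt]
      omega
    have hvhat : vhat hn2 v = vhat hn2 v' := by
      apply Sym.coe_injective
      show Multiset.map _ (↑v : Multiset (Fin n)) = Multiset.map _ s'
      conv_lhs => rw [← Multiset.cons_erase hmem]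
      rw [hs', Multiset.map_cons, Multiset.map_cons, if_pos rfl,
        if_neg (pen_ne_lst hn2)]
    have hstep := rk_succ_step hn2 h1 h2 h3
    have hjv' : cnt v' (lst hn2) = j := by omega
    have := ih v' hjv'
    rw [hstep, this, hvhat]
    omega

theorem filter_gt_pen_eq : Finset.univ.filter (pen hn2 < ·) = ({lst hn2} : Finset (Fin n)) := by
  ext k
  simp only [Finset.mem_filter, Finset.mem_univ, true_and, Finset.mem_singleton]
  constructor
  · intro hk
    rcases fin_trichotomy hn2 k with h | h | h
    · exact absurd (h.trans (pen_lt_lst hn2)) (by rw [Fin.lt_def] at hk ⊢; omega)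
    · rw [h] at hk; exact absurd hk (lt_irrefl _)
    · exact h
  · rintro rfl; exact pen_lt_lst hn2

/-- (A): if W is not divisible by x_last and W > x_last · v then W > x_last · vhat v -/
theorem lt_cons_vhat_of_lt {d : ℕ} {v : Sym (Fin n) d} {W : Sym (Fin n) (d + 1)}
    (hWl : lst hn2 ∉ W) (h : mLex (lst hn2 ::ₛ v) < mLex W) :
    mLex (lst hn2 ::ₛ vhat hn2 v) < mLex W := by
  classical
  have hW0 : cnt W (lst hn2) = 0 := by
    rw [cnt, Multiset.count_eq_zero]
    intro hc; exact hWl (by rwa [Sym.mem_coe] at hc)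
  obtain ⟨i₀, hpre, hlt₀⟩ := mLex_lt_iff.1 h
  rcases fin_trichotomy hn2 i₀ with htri | htri | htri
  · -- i₀ < pen
    rw [mLex_lt_iff]
    refine ⟨i₀, fun k hk => ?_, ?_⟩
    · have hk1 : k < pen hn2 := hk.trans htri
      have hk2 : k ≠ lst hn2 := ne_of_lt (hk1.trans (pen_lt_lst hn2))
      rw [cnt_cons, if_neg hk2, cnt_vhat, if_neg hk2, if_neg (ne_of_lt hk1)]
      have h1 := hpre k hk
      rw [cnt_cons, if_neg hk2] at h1
      omega
    · have hk2 : i₀ ≠ lst hn2 := ne_of_lt (htri.trans (pen_lt_lst hn2))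
      rw [cnt_cons, if_neg hk2, cnt_vhat, if_neg hk2, if_neg (ne_of_lt htri)]
      rw [cnt_cons, if_neg hk2] at hlt₀
      omega
  · -- i₀ = pen : use degree count
    subst htri
    have hprev : ∀ k, k < pen hn2 → cnt v k = cnt W k := by
      intro k hk
      have h1 := hpre k hk
      rw [cnt_cons, if_neg (ne_of_lt (hk.trans (pen_lt_lst hn2)))] at h1
      omega
    have hsv := cnt_sum v
    have hsW := cnt_sum W
    rw [sum_split_three (pen hn2)] at hsv hsW
    rw [filter_gt_pen_eq hn2, Finset.sum_singleton] at hsv hsW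
    have heqs : ∑ k ∈ Finset.univ.filter (· < pen hn2), cnt v k
        = ∑ k ∈ Finset.univ.filter (· < pen hn2), cnt W k :=
      Finset.sum_congr rfl fun k hk => hprev k (by simpa using hk)
    have hWpen : cnt W (pen hn2) = cnt v (pen hn2) + cnt v (lst hn2) + 1 := by omega
    rw [mLex_lt_iff]
    refine ⟨pen hn2, fun k hk => ?_, ?_⟩
    · have hk2 : k ≠ lst hn2 := ne_of_lt (hk.trans (pen_lt_lst hn2))
      rw [cnt_cons, if_neg hk2, cnt_vhat, if_neg hk2, if_neg (ne_of_lt hk)]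
      exact hprev k hk
    · rw [cnt_cons, if_neg (pen_ne_lst hn2), cnt_vhat, if_neg (pen_ne_lst hn2), if_pos rfl]
      omega
  · -- i₀ = lst : impossible
    exfalso
    subst htri
    rw [cnt_cons, if_pos rfl] at hlt₀
    omega

/-- (B1) : the witness monomial W' = x_pen · vhat v is > x_last · v -/
theorem Wp_gt {d : ℕ} (v : Sym (Fin n) d) :
    mLex (lst hn2 ::ₛ v) < mLex (pen hn2 ::ₛ vhat hn2 v) := by
  rw [mLex_lt_iff]
  refine ⟨pen hn2, fun k hk => ?_, ?_⟩
  · have hk2 : k ≠ lst hn2 := ne_of_lt (hk.trans (pen_lt_lst hn2))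
    rw [cnt_cons, if_neg hk2, cnt_cons, if_neg (ne_of_lt hk), cnt_vhat,
      if_neg hk2, if_neg (ne_of_lt hk)]
  · rw [cnt_cons, if_neg (pen_ne_lst hn2), cnt_cons, if_pos rfl, cnt_vhat,
      if_neg (pen_ne_lst hn2), if_pos rfl]
    omega

theorem lst_notMem_Wp {d : ℕ} (v : Sym (Fin n) d) :
    lst hn2 ∉ (pen hn2 ::ₛ vhat hn2 v) := by
  rw [Sym.mem_cons]
  rintro (h | h)
  · exact pen_ne_lst hn2 h.symm
  · have := mem_iff_cnt_pos.1 h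
    rw [cnt_vhat_lst] at this
    omega

/-- (B2) : if vhat v < w₀ then W' < x_last · w₀ -/
theorem Wp_lt {d : ℕ} {v w₀ : Sym (Fin n) d} (h : mLex (vhat hn2 v) < mLex w₀) :
    mLex (pen hn2 ::ₛ vhat hn2 v) < mLex (lst hn2 ::ₛ w₀) := by
  classical
  obtain ⟨i₀, hpre, hlt₀⟩ := mLex_lt_iff.1 h
  rcases fin_trichotomy hn2 i₀ with htri | htri | htri
  · rw [mLex_lt_iff]
    refine ⟨i₀, fun k hk => ?_, ?_⟩
    · have hk1 : k < pen hn2 := hk.trans htri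
      have hk2 : k ≠ lst hn2 := ne_of_lt (hk1.trans (pen_lt_lst hn2))
      rw [cnt_cons, if_neg (ne_of_lt hk1), cnt_cons, if_neg hk2]
      have := hpre k hk
      omega
    · have hk2 : i₀ ≠ lst hn2 := ne_of_lt (htri.trans (pen_lt_lst hn2))
      rw [cnt_cons, if_neg (ne_of_lt htri), cnt_cons, if_neg hk2]
      omega
  · subst htri
    rcases eq_or_lt_of_le (by omega : cnt (vhat hn2 v) (pen hn2) + 1 ≤ cnt w₀ (pen hn2))
      with heq | hlt
    · -- equal : compare at lst
      rw [mLex_lt_iff]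
      refine ⟨lst hn2, fun k hk => ?_, ?_⟩
      · rcases eq_or_ne k (pen hn2) with rfl | hkp
        · rw [cnt_cons, if_pos rfl, cnt_cons, if_neg (pen_ne_lst hn2)]
          omega
        · have hk1 : k < pen hn2 := lt_pen_of_lt_lst hn2 hk hkp
          rw [cnt_cons, if_neg hkp, cnt_cons, if_neg (ne_of_lt hk)]
          have := hpre k hk1
          omega
      · rw [cnt_cons, if_neg (Ne.symm (pen_ne_lst hn2)), cnt_cons, if_pos rfl,
          cnt_vhat_lst]
        omega
    · rw [mLex_lt_iff]
      refine ⟨pen hn2, fun k hk => ?_, ?_⟩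
      · have hk2 : k ≠ lst hn2 := ne_of_lt (hk.trans (pen_lt_lst hn2))
        rw [cnt_cons, if_neg (ne_of_lt hk), cnt_cons, if_neg hk2]
        have := hpre k hk
        omega
      · rw [cnt_cons, if_pos rfl, cnt_cons, if_neg (pen_ne_lst hn2)]
        omega
  · -- i₀ = lst : impossible
    exfalso
    subst htri
    have : vhat hn2 v = w₀ := eq_of_agree_below_top hn2 hpre
    rw [this] at hlt₀
    omega

theorem delta_eq_seg {d : ℕ} {v w₀ : Sym (Fin n) d} (hn : 0 < n)
    (hv1 : mLex v ≤ mLex w₀) (hv2 : mLex w₀ ≤ mLex (vhat hn2 v)) :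
    delta hn w₀ = delta hn v := by
  have hl : (⟨n - 1, by omega⟩ : Fin n) = lst hn2 := rfl
  rw [delta, delta]
  congr 1
  ext W
  simp only [Finset.mem_filter, Finset.mem_univ, true_and, hl]
  constructor
  · rintro ⟨h1, h2⟩
    refine ⟨h1, lt_of_le_of_lt (mLex_cons_le_cons_iff.2 hv1) h2⟩
  · rintro ⟨h1, h2⟩
    refine ⟨h1, lt_of_le_of_lt (mLex_cons_le_cons_iff.2 hv2)
      (lt_cons_vhat_of_lt hn2 h1 h2)⟩

theorem delta_lt_seg {d : ℕ} {v w₀ : Sym (Fin n) d} (hn : 0 < n)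
    (h : mLex (vhat hn2 v) < mLex w₀) :
    delta hn w₀ < delta hn v := by
  have hl : (⟨n - 1, by omega⟩ : Fin n) = lst hn2 := rfl
  rw [delta, delta]
  apply Finset.card_lt_card
  constructor
  · intro W hW
    simp only [Finset.mem_filter, Finset.mem_univ, true_and, hl] at hW ⊢
    refine ⟨hW.1, ?_⟩
    have hvw : mLex v < mLex w₀ := lt_of_le_of_lt (mLex_le_vhat hn2 v) h
    exact lt_trans (mLex_cons_lt_cons_iff.2 hvw) hW.2
  · intro hsub
    have hmem : (pen hn2 ::ₛ vhat hn2 v) ∈ Finset.univ.filter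
        (fun W : Sym (Fin n) (d + 1) => (⟨n - 1, by omega⟩ : Fin n) ∉ W ∧
          mLex ((⟨n - 1, by omega⟩ : Fin n) ::ₛ v) < mLex W) := by
      simp only [Finset.mem_filter, Finset.mem_univ, true_and, hl]
      exact ⟨lst_notMem_Wp hn2 v, Wp_gt hn2 v⟩
    have h2 := hsub hmem
    simp only [Finset.mem_filter, Finset.mem_univ, true_and, hl] at h2
    exact absurd (lt_trans h2.2 (Wp_lt hn2 h)) (lt_irrefl _)

end Pen

theorem zero_le_fin (hn : 0 < n) (i : Fin n) : (⟨0, hn⟩ : Fin n) ≤ i := by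
  rw [Fin.le_def]; simp

theorem shad_lexseg_eq (hn : 0 < n) {d : ℕ} {u v : Sym (Fin n) d} (huv : mLex v ≤ mLex u)
    (hseg : IsLexSegF (shadF (lexSegF u v))) :
    shadF (lexSegF u v) = Finset.univ.filter (fun W : Sym (Fin n) (d + 1) =>
      mLex ((⟨n - 1, by omega⟩ : Fin n) ::ₛ v) ≤ mLex W
        ∧ mLex W ≤ mLex ((⟨0, hn⟩ : Fin n) ::ₛ u)) := by
  classical
  set last : Fin n := ⟨n - 1, by omega⟩ with hlast
  have humem : u ∈ lexSegF u v := by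
    simp only [lexSegF, Finset.mem_filter, Finset.mem_univ, true_and]
    exact ⟨huv, le_rfl⟩
  have hvmem : v ∈ lexSegF u v := by
    simp only [lexSegF, Finset.mem_filter, Finset.mem_univ, true_and]
    exact ⟨le_rfl, huv⟩
  ext W
  simp only [Finset.mem_filter, Finset.mem_univ, true_and]
  constructor
  · intro hW
    obtain ⟨i, w, hw, rfl⟩ := mem_shadF.1 hW
    simp only [lexSegF, Finset.mem_filter, Finset.mem_univ, true_and] at hw
    constructor
    · calc mLex (last ::ₛ v) ≤ mLex (last ::ₛ w) := mLex_cons_le_cons_iff.2 hw.1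
        _ ≤ mLex (i ::ₛ w) := mLex_cons_le_cons_left (le_last hn i) w
    · calc mLex (i ::ₛ w) ≤ mLex ((⟨0, hn⟩ : Fin n) ::ₛ w) :=
          mLex_cons_le_cons_left (zero_le_fin hn i) w
        _ ≤ mLex ((⟨0, hn⟩ : Fin n) ::ₛ u) := mLex_cons_le_cons_iff.2 hw.2
  · rintro ⟨h1, h2⟩
    refine hseg ((⟨0, hn⟩ : Fin n) ::ₛ u) W (last ::ₛ v) ?_ ?_ h1 h2
    · exact mem_shadF.2 ⟨_, u, humem, rfl⟩
    · exact mem_shadF.2 ⟨_, v, hvmem, rfl⟩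

end Aux

/-- let `u ≥_lex v` be monomials of degree `d` in `S = k[x_1,...,x_n]` with
`x_1 ∣ u`, such that `I = (L(u,v))` is a completely lexsegment ideal which is not an
initial lexsegment ideal.  Let `j` be the exponent of `x_n` in `v` and
`a = |Mon_d(S) \ L^i(u)|`.  Then `I` is Gotzmann iff `a ≥ C(n+d-1, d) - (j+1)`.
(Variables are 0-indexed: `x_1` is index `0`, `x_n` is index `n - 1`; "not initial" means
`u ≠ x_1^d`.) -/

theorem stmt19 (n d : ℕ) (hn : 0 < n) (hd : 0 < d) (u v : Sym (Fin n) d)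
    (huv : mLex v ≤ mLex u)
    (hx1 : (⟨0, hn⟩ : Fin n) ∈ u)
    (hcomplete : ∀ m : ℕ, IsLexSegF (shadIterF (lexSegF u v) m))
    (hnotinitial : u ≠ Sym.replicate d (⟨0, hn⟩ : Fin n)) :
    IsGotzmannF (lexSegF u v) ↔
      Nat.choose (n + d - 1) d -
          ((Multiset.count (⟨n - 1, by omega⟩ : Fin n) (↑v : Multiset (Fin n))) + 1)
        ≤ (Finset.univ.filter (fun w : Sym (Fin n) d => ¬ mLex u ≤ mLex w)).card := by
  classical
  have hn2 : 2 ≤ n := by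
    rcases Nat.lt_or_ge n 2 with h | h
    · exfalso
      apply hnotinitial
      rw [Sym.eq_replicate_iff]
      intro b hb
      apply Fin.ext
      have := b.isLt
      simp
      omega
    · exact h
  set L := lexSegF u v with hLdef
  have hL1 : L.card + Aux.rk u = Aux.rk v + 1 :=
    Aux.card_lexseg huv L (by rw [hLdef, lexSegF])
  have hru1 : 1 ≤ Aux.rk u := Aux.one_le_rk u
  have hruv : Aux.rk u ≤ Aux.rk v := Aux.rk_le_rk huv
  have hshadseg : IsLexSegF (shadF L) := hcomplete 1
  have hSL : (shadF L).card + Aux.rk u = Aux.rk v + Aux.delta hn v + 1 := by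
    have hlowhigh : mLex ((⟨n - 1, by omega⟩ : Fin n) ::ₛ v)
        ≤ mLex ((⟨0, hn⟩ : Fin n) ::ₛ u) :=
      le_trans (Aux.mLex_cons_le_cons_iff.2 huv)
        (Aux.mLex_cons_le_cons_left (Aux.zero_le_fin hn _) u)
    have h0 := Aux.card_lexseg hlowhigh (shadF L) (Aux.shad_lexseg_eq hn huv hshadseg)
    rw [Aux.rk_cons_zero hn u, Aux.rk_cons_last hn v] at h0
    omega
  have hvhat := Aux.rk_vhat hn2 v
  have hjdef : Multiset.count (⟨n - 1, by omega⟩ : Fin n) (↑v : Multiset (Fin n))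
      = Aux.cnt v (Aux.lst hn2) := rfl
  have hacard : (Finset.univ.filter (fun w : Sym (Fin n) d => ¬ mLex u ≤ mLex w)).card
      + Aux.rk u = Fintype.card (Sym (Fin n) d) := by
    rw [Aux.rk, add_comm, Finset.card_filter_add_card_filter_not, Finset.card_univ]
  have hC : Fintype.card (Sym (Fin n) d) = (n + d - 1).choose d := by
    rw [Sym.card_sym_eq_choose, Fintype.card_fin]
  have hrkuC : Aux.rk u ≤ Fintype.card (Sym (Fin n) d) := by
    rw [Aux.rk, ← Finset.card_univ]
    exact Finset.card_filter_le _ _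
  constructor
  · intro hG
    have key : Aux.rk u ≤ Aux.cnt v (Aux.lst hn2) + 1 := by
      by_contra hky
      push_neg at hky
      obtain ⟨T, hup, hTcard⟩ := Aux.exists_upclosed (e := d) L.card
        (by rw [← Finset.card_univ]; exact Finset.card_le_univ L)
      have hTpos : 0 < T.card := by omega
      obtain ⟨w₀, hw₀T, hTeq⟩ := Aux.upclosed_eq_filter hup (Finset.card_pos.1 hTpos)
      have hrkw₀ : Aux.rk w₀ = L.card := by
        rw [hTeq] at hTcard
        exact hTcard
      have hST : (shadF T).card = Aux.rk w₀ + Aux.delta hn w₀ := by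
        rw [hTeq, Aux.shad_initial hn w₀, ← Aux.rk_cons_last hn w₀]
        rfl
      have hwv : mLex (Aux.vhat hn2 v) < mLex w₀ := by
        rcases le_or_gt (mLex w₀) (mLex (Aux.vhat hn2 v)) with h | h
        · exfalso
          have := Aux.rk_le_rk h
          omega
        · exact h
      have hdlt := Aux.delta_lt_seg hn2 hn hwv
      have hgt := hG T hup hTcard
      omega
    rw [hjdef, ← hC]
    omega
  · intro hineq
    rw [hjdef, ← hC] at hineq
    have key : Aux.rk u ≤ Aux.cnt v (Aux.lst hn2) + 1 := by omega
    intro T hup hTcard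
    have hTpos : 0 < T.card := by omega
    obtain ⟨w₀, hw₀T, hTeq⟩ := Aux.upclosed_eq_filter hup (Finset.card_pos.1 hTpos)
    have hrkw₀ : Aux.rk w₀ = L.card := by
      rw [hTeq] at hTcard
      exact hTcard
    have hST : (shadF T).card = Aux.rk w₀ + Aux.delta hn w₀ := by
      rw [hTeq, Aux.shad_initial hn w₀, ← Aux.rk_cons_last hn w₀]
      rfl
    have hvw₀ : mLex v ≤ mLex w₀ := Aux.mLex_le_of_rk_le (by omega)
    have hw₀vhat : mLex w₀ ≤ mLex (Aux.vhat hn2 v) := Aux.mLex_le_of_rk_le (by omega)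
    have hdeq := Aux.delta_eq_seg hn2 hn hvw₀ hw₀vhat
    omega
end
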